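/- arXiv:2410.13555 — 7 statements merged into one kernel-verified Lean document; each statement's English description precedes it below -/
import Mathlib

section
/- For each non-negative integer N: Rg(3,3,2;2N) = rP(3,4,4;N) + rG(3,2,2;N−1) and Rg(3,3,2;2N+1) = 4·Tg(6,6,1;N−1). -/
/-- The `n`-th triangular number `n(n+1)/2`. -/
def tri (n : ℕ) : ℕ := n * (n + 1) / 2

/-- The `n`-th generalized pentagonal number `n(3n+1)/2` (`n ∈ ℤ`). -/
def pent (n : ℤ) : ℤ := n * (3 * n + 1) / 2

/-- The `n`-th generalized octagonal number `n(3n+2)` (`n ∈ ℤ`). -/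
def oct (n : ℤ) : ℤ := n * (3 * n + 2)
noncomputable def rCount (a b c : ℕ) (N : ℤ) : ℕ :=
  {x : ℤ × ℤ × ℤ | N = a * x.1 ^ 2 + b * x.2.1 ^ 2 + c * x.2.2 ^ 2}.ncard

noncomputable def TCount (a b c : ℕ) (N : ℤ) : ℕ :=
  {x : ℕ × ℕ × ℕ | N = a * tri x.1 + b * tri x.2.1 + c * tri x.2.2}.ncard

noncomputable def rTCount (a b c : ℕ) (N : ℤ) : ℕ :=
  {x : ℤ × ℕ × ℕ | N = a * x.1 ^ 2 + b * tri x.2.1 + c * tri x.2.2}.ncard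

noncomputable def RtCount (a b c : ℕ) (N : ℤ) : ℕ :=
  {x : ℤ × ℤ × ℕ | N = a * x.1 ^ 2 + b * x.2.1 ^ 2 + c * tri x.2.2}.ncard

noncomputable def GCount (a b c : ℕ) (N : ℤ) : ℕ :=
  {x : ℤ × ℤ × ℤ | N = a * oct x.1 + b * oct x.2.1 + c * oct x.2.2}.ncard

noncomputable def RgCount (a b c : ℕ) (N : ℤ) : ℕ :=
  {x : ℤ × ℤ × ℤ | N = a * x.1 ^ 2 + b * x.2.1 ^ 2 + c * oct x.2.2}.ncard

noncomputable def RpCount (a b c : ℕ) (N : ℤ) : ℕ :=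
  {x : ℤ × ℤ × ℤ | N = a * x.1 ^ 2 + b * x.2.1 ^ 2 + c * pent x.2.2}.ncard

noncomputable def rPCount (a b c : ℕ) (N : ℤ) : ℕ :=
  {x : ℤ × ℤ × ℤ | N = a * x.1 ^ 2 + b * pent x.2.1 + c * pent x.2.2}.ncard

noncomputable def rGCount (a b c : ℕ) (N : ℤ) : ℕ :=
  {x : ℤ × ℤ × ℤ | N = a * x.1 ^ 2 + b * oct x.2.1 + c * oct x.2.2}.ncard

noncomputable def pGCount (a b c : ℕ) (N : ℤ) : ℕ :=
  {x : ℤ × ℤ × ℤ | N = a * pent x.1 + b * oct x.2.1 + c * oct x.2.2}.ncard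

noncomputable def TpCount (a b c : ℕ) (N : ℤ) : ℕ :=
  {x : ℕ × ℕ × ℤ | N = a * tri x.1 + b * tri x.2.1 + c * pent x.2.2}.ncard

noncomputable def TgCount (a b c : ℕ) (N : ℤ) : ℕ :=
  {x : ℕ × ℕ × ℤ | N = a * tri x.1 + b * tri x.2.1 + c * oct x.2.2}.ncard

noncomputable def tGCount (a b c : ℕ) (N : ℤ) : ℕ :=
  {x : ℕ × ℤ × ℤ | N = a * tri x.1 + b * oct x.2.1 + c * oct x.2.2}.ncard

noncomputable def rtpCount (a b c : ℕ) (N : ℤ) : ℕ :=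
  {x : ℤ × ℕ × ℤ | N = a * x.1 ^ 2 + b * tri x.2.1 + c * pent x.2.2}.ncard

noncomputable def rtgCount (a b c : ℕ) (N : ℤ) : ℕ :=
  {x : ℤ × ℕ × ℤ | N = a * x.1 ^ 2 + b * tri x.2.1 + c * oct x.2.2}.ncard

noncomputable def tpgCount (a b c : ℕ) (N : ℤ) : ℕ :=
  {x : ℕ × ℤ × ℤ | N = a * tri x.1 + b * pent x.2.1 + c * oct x.2.2}.ncard


lemma oct_eq (n : ℤ) : oct n = 3*n^2 + 2*n := by unfold oct; ring
lemma oct_nonneg (n : ℤ) : 0 ≤ oct n := by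
  rcases le_or_gt 0 n with h | h
  · exact mul_nonneg h (by linarith)
  · exact le_of_lt (mul_pos_of_neg_of_neg h (by linarith))
lemma prod_succ_nonneg (a : ℤ) : 0 ≤ a*(a+1) := by
  rcases le_or_gt 0 a with h | h
  · exact mul_nonneg h (by linarith)
  · nlinarith
lemma pent4 (m : ℤ) : 4 * pent m = 6*m^2 + 2*m := by
  have hd : (2:ℤ) ∣ m * (3*m+1) := by
    rcases Int.even_or_odd m with ⟨k, hk⟩ | ⟨k, hk⟩
    · exact ⟨k*(3*m+1), by rw [hk]; ring⟩
    · exact ⟨m*(3*k+2), by rw [hk]; ring⟩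
  have h := Int.ediv_mul_cancel hd
  unfold pent
  linear_combination 2 * h
lemma sq_bnd {x C : ℤ} (hC : 0 ≤ C) (h : x^2 ≤ C) : -C ≤ x ∧ x ≤ C := by
  constructor <;> nlinarith [sq_nonneg (x+1), sq_nonneg (x-1)]
lemma prod_bnd {a C : ℤ} (hC : 0 ≤ C) (h : a*(a+1) ≤ C) : -(C+1) ≤ a ∧ a ≤ C+1 := by
  constructor <;> nlinarith [sq_nonneg (a+1), sq_nonneg (a-1)]
lemma finite_bdd {S : Set (ℤ×ℤ×ℤ)} {C : ℤ}
    (h : ∀ x ∈ S, -C ≤ x.1 ∧ x.1 ≤ C ∧ -C ≤ x.2.1 ∧ x.2.1 ≤ C ∧ -C ≤ x.2.2 ∧ x.2.2 ≤ C) :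
    S.Finite := by
  apply Set.Finite.subset ((Set.finite_Icc (-C) C).prod
    ((Set.finite_Icc (-C) C).prod (Set.finite_Icc (-C) C)))
  rintro ⟨a,b,c⟩ hx
  obtain ⟨h1,h2,h3,h4,h5,h6⟩ := h _ hx
  exact ⟨⟨h1,h2⟩, ⟨h3,h4⟩, ⟨h5,h6⟩⟩

lemma Rg_norm (M : ℤ) : RgCount 3 3 2 M =
    {x : ℤ×ℤ×ℤ | M = 3*x.1^2 + 3*x.2.1^2 + 2*oct x.2.2}.ncard := by
  unfold RgCount; congr 1

lemma rP_norm (M : ℤ) : rPCount 3 4 4 M =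
    {x : ℤ×ℤ×ℤ | M = 3*x.1^2 + 4*pent x.2.1 + 4*pent x.2.2}.ncard := by
  unfold rPCount; congr 1

lemma rG_norm (M : ℤ) : rGCount 3 2 2 M =
    {x : ℤ×ℤ×ℤ | M = 3*x.1^2 + 2*oct x.2.1 + 2*oct x.2.2}.ncard := by
  unfold rGCount; congr 1

lemma Tg_norm (M : ℤ) : TgCount 6 6 1 M =
    {x : ℕ×ℕ×ℤ | M = 6*(tri x.1 : ℤ) + 6*(tri x.2.1 : ℤ) + oct x.2.2}.ncard := by
  unfold TgCount; congr 1; ext x; simp only [Set.mem_setOf_eq]; push_cast; rw [one_mul]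

lemma tri2 (n : ℕ) : 2 * tri n = n * (n+1) := by
  unfold tri
  exact Nat.mul_div_cancel' (Nat.even_mul_succ_self n).two_dvd

lemma tri6 (p : ℕ) : (6:ℤ) * (tri p : ℤ) = 3*((p:ℤ)*((p:ℤ)+1)) := by
  have h := tri2 p
  have h2 : ((2 * tri p : ℕ) : ℤ) = ((p * (p+1) : ℕ) : ℤ) := by rw [h]
  push_cast at h2
  linarith

lemma part2 (N : ℕ) :
    RgCount 3 3 2 (2 * N + 1 : ℤ) = 4 * TgCount 6 6 1 ((N : ℤ) - 1) := by
  have hN : (0:ℤ) ≤ (N:ℤ) := Int.natCast_nonneg N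
  set T : Set (ℤ×ℤ×ℤ) :=
    {x | (N:ℤ) - 1 = 3*(x.1*(x.1+1)) + 3*(x.2.1*(x.2.1+1)) + oct x.2.2} with hT
  -- Step 1 : RgCount (2N+1) = T.ncard
  have key1 : RgCount 3 3 2 (2 * N + 1 : ℤ) = T.ncard := by
    have hinj : Function.Injective
        (fun x : ℤ×ℤ×ℤ => (x.1 + x.2.1 + 1, x.1 - x.2.1, x.2.2)) := by
      rintro ⟨a,b,c⟩ ⟨d,e,f⟩ h
      simp only [Prod.mk.injEq] at h ⊢
      omega
    rw [Rg_norm, ← Set.ncard_image_of_injective T hinj]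
    congr 1
    ext ⟨l,m,k⟩
    simp only [Set.mem_image, Set.mem_setOf_eq, Prod.mk.injEq, hT]
    constructor
    · rintro h
      rcases Int.even_or_odd l with ⟨a,ha⟩ | ⟨a,ha⟩ <;>
        rcases Int.even_or_odd m with ⟨b,hb⟩ | ⟨b,hb⟩ <;> subst ha hb
      · exfalso
        have h3 : 2*(6*a^2 + 6*b^2 + oct k - (N:ℤ)) = 1 := by linear_combination -h
        exact absurd ⟨_, h3.symm⟩ (by norm_num : ¬ (2:ℤ) ∣ 1)
      · refine ⟨(a+b, a-b-1, k), ?_, ?_, ?_, rfl⟩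
        · show (N:ℤ) - 1 = 3*((a+b)*((a+b)+1)) + 3*((a-b-1)*((a-b-1)+1)) + oct k
          have h2 : 2*((N:ℤ) - 1) =
              2*(3*((a+b)*((a+b)+1)) + 3*((a-b-1)*((a-b-1)+1)) + oct k) := by
            linear_combination h
          linarith
        · show (a+b) + (a-b-1) + 1 = a + a; ring
        · show (a+b) - (a-b-1) = 2*b + 1; ring
      · refine ⟨(a+b, a-b, k), ?_, ?_, ?_, rfl⟩
        · show (N:ℤ) - 1 = 3*((a+b)*((a+b)+1)) + 3*((a-b)*((a-b)+1)) + oct k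
          have h2 : 2*((N:ℤ) - 1) =
              2*(3*((a+b)*((a+b)+1)) + 3*((a-b)*((a-b)+1)) + oct k) := by
            linear_combination h
          linarith
        · show (a+b) + (a-b) + 1 = 2*a + 1; ring
        · show (a+b) - (a-b) = b + b; ring
      · exfalso
        have h3 : 2*((N:ℤ) - 6*a^2 - 6*a - 6*b^2 - 6*b - oct k) = 5 := by
          linear_combination h
        exact absurd ⟨_, h3.symm⟩ (by norm_num : ¬ (2:ℤ) ∣ 5)
    · rintro ⟨⟨u,v,w⟩, hmem, h1, h2, h3⟩
      simp only at hmem h1 h2 h3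
      subst h3
      rw [← h1, ← h2]
      linear_combination 2 * hmem
  -- finiteness of T
  have hTfin : T.Finite := by
    apply finite_bdd (C := (N:ℤ)+1)
    rintro ⟨a,b,k⟩ hx
    simp only [hT, Set.mem_setOf_eq] at hx
    have h1 := oct_nonneg k
    have h2 : (0:ℤ) ≤ 2*k*(k+1) := by have := prod_succ_nonneg k; linarith
    have pa := prod_succ_nonneg a
    have pb := prod_succ_nonneg b
    have ha : a*(a+1) ≤ (N:ℤ) := by linarith
    have hb : b*(b+1) ≤ (N:ℤ) := by linarith
    have hk : k^2 ≤ (N:ℤ)+1 := by nlinarith [oct_eq k]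
    obtain ⟨a1,a2⟩ := prod_bnd hN ha
    obtain ⟨b1,b2⟩ := prod_bnd hN hb
    obtain ⟨c1,c2⟩ := sq_bnd (by linarith) hk
    exact ⟨a1,a2,b1,b2,c1,c2⟩
  -- the four sign sectors
  have keyT : ∀ (f g : ℕ → ℤ), Function.Injective f → Function.Injective g →
      (∀ p, (f p)*((f p)+1) = (p:ℤ)*((p:ℤ)+1)) → (∀ p, (g p)*((g p)+1) = (p:ℤ)*((p:ℤ)+1)) →
      ∀ (P Q : ℤ → Prop), (∀ a, P a ↔ (∃ p, f p = a)) → (∀ b, Q b ↔ (∃ q, g q = b)) →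
      ({x ∈ T | P x.1 ∧ Q x.2.1}).ncard = TgCount 6 6 1 ((N:ℤ) - 1) := by
    intro f g hf hg hfp hgp P Q hP hQ
    rw [Tg_norm]
    have hinj : Function.Injective
        (fun x : ℕ×ℕ×ℤ => ((f x.1, g x.2.1, x.2.2) : ℤ×ℤ×ℤ)) := by
      rintro ⟨p,q,k⟩ ⟨p',q',k'⟩ h
      simp only [Prod.mk.injEq] at h ⊢
      exact ⟨hf h.1, hg h.2.1, h.2.2⟩
    rw [← Set.ncard_image_of_injective
      {x : ℕ×ℕ×ℤ | (N:ℤ) - 1 = 6*(tri x.1 : ℤ) + 6*(tri x.2.1 : ℤ) + oct x.2.2} hinj]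
    congr 1
    ext ⟨a,b,k⟩
    simp only [Set.mem_image, Set.mem_setOf_eq, Set.mem_sep_iff, Prod.mk.injEq, hT]
    constructor
    · rintro ⟨hmem, hPa, hQb⟩
      obtain ⟨p, hp⟩ := (hP a).mp hPa
      obtain ⟨q, hq⟩ := (hQ b).mp hQb
      refine ⟨(p, q, k), ?_, hp, hq, rfl⟩
      show (N:ℤ) - 1 = 6*(tri p : ℤ) + 6*(tri q : ℤ) + oct k
      have e1 : (6:ℤ)*(tri p : ℤ) = 3*(a*(a+1)) := by rw [tri6, ← hfp p, hp]
      have e2 : (6:ℤ)*(tri q : ℤ) = 3*(b*(b+1)) := by rw [tri6, ← hgp q, hq]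
      linarith [hmem]
    · rintro ⟨⟨p,q,w⟩, hmem, h1, h2, h3⟩
      simp only at hmem h1 h2 h3
      subst h3
      refine ⟨?_, (hP a).mpr ⟨p, h1⟩, (hQ b).mpr ⟨q, h2⟩⟩
      show (N:ℤ) - 1 = 3*(a*(a+1)) + 3*(b*(b+1)) + oct w
      have e1 : (6:ℤ)*(tri p : ℤ) = 3*(a*(a+1)) := by rw [tri6, ← hfp p, h1]
      have e2 : (6:ℤ)*(tri q : ℤ) = 3*(b*(b+1)) := by rw [tri6, ← hgp q, h2]
      linarith [hmem]
  have fpos : Function.Injective (fun p : ℕ => (p:ℤ)) := fun p p' h => Nat.cast_injective h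
  have fneg : Function.Injective (fun p : ℕ => -1 - (p:ℤ)) := fun p p' h => by
    have h' : -1 - (p:ℤ) = -1 - (p':ℤ) := h
    omega
  have idpos : ∀ p : ℕ, ((p:ℤ))*(((p:ℤ))+1) = (p:ℤ)*((p:ℤ)+1) := fun p => rfl
  have idneg : ∀ p : ℕ, (-1-(p:ℤ))*((-1-(p:ℤ))+1) = (p:ℤ)*((p:ℤ)+1) := fun p => by ring
  have hPpos : ∀ a : ℤ, (0 ≤ a) ↔ (∃ p : ℕ, (fun p : ℕ => (p:ℤ)) p = a) := by
    intro a
    constructor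
    · intro h; exact ⟨a.toNat, Int.toNat_of_nonneg h⟩
    · rintro ⟨p, rfl⟩; exact Int.natCast_nonneg p
  have hPneg : ∀ a : ℤ, (a < 0) ↔ (∃ p : ℕ, (fun p : ℕ => -1 - (p:ℤ)) p = a) := by
    intro a
    constructor
    · intro h; exact ⟨(-1-a).toNat, show -1 - ((-1-a).toNat : ℤ) = a by omega⟩
    · rintro ⟨p, rfl⟩; show -1 - (p:ℤ) < 0; omega
  have k1 : ({x ∈ T | 0 ≤ x.1 ∧ 0 ≤ x.2.1}).ncard = TgCount 6 6 1 ((N:ℤ) - 1) :=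
    keyT _ _ fpos fpos idpos idpos _ _ hPpos hPpos
  have k2 : ({x ∈ T | x.1 < 0 ∧ 0 ≤ x.2.1}).ncard = TgCount 6 6 1 ((N:ℤ) - 1) :=
    keyT _ _ fneg fpos idneg idpos _ _ hPneg hPpos
  have k3 : ({x ∈ T | 0 ≤ x.1 ∧ x.2.1 < 0}).ncard = TgCount 6 6 1 ((N:ℤ) - 1) :=
    keyT _ _ fpos fneg idpos idneg _ _ hPpos hPneg
  have k4 : ({x ∈ T | x.1 < 0 ∧ x.2.1 < 0}).ncard = TgCount 6 6 1 ((N:ℤ) - 1) :=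
    keyT _ _ fneg fneg idneg idneg _ _ hPneg hPneg
  -- assemble
  have hsub1 : {x ∈ T | 0 ≤ x.1 ∧ 0 ≤ x.2.1} ⊆ T := fun x hx => hx.1
  have hsub2 : {x ∈ T | x.1 < 0 ∧ 0 ≤ x.2.1} ⊆ T := fun x hx => hx.1
  have hsub3 : {x ∈ T | 0 ≤ x.1 ∧ x.2.1 < 0} ⊆ T := fun x hx => hx.1
  have hsub4 : {x ∈ T | x.1 < 0 ∧ x.2.1 < 0} ⊆ T := fun x hx => hx.1
  have hun : T = ({x ∈ T | 0 ≤ x.1 ∧ 0 ≤ x.2.1} ∪ {x ∈ T | x.1 < 0 ∧ 0 ≤ x.2.1}) ∪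
      ({x ∈ T | 0 ≤ x.1 ∧ x.2.1 < 0} ∪ {x ∈ T | x.1 < 0 ∧ x.2.1 < 0}) := by
    ext x
    simp only [Set.mem_union, Set.mem_sep_iff]
    constructor
    · intro hx
      rcases le_or_gt 0 x.1 with h | h <;> rcases le_or_gt 0 x.2.1 with h' | h'
      · exact Or.inl (Or.inl ⟨hx, h, h'⟩)
      · exact Or.inr (Or.inl ⟨hx, h, h'⟩)
      · exact Or.inl (Or.inr ⟨hx, h, h'⟩)
      · exact Or.inr (Or.inr ⟨hx, h, h'⟩)
    · rintro ((⟨h,_⟩|⟨h,_⟩)|(⟨h,_⟩|⟨h,_⟩)) <;> exact h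
  have hd12 : Disjoint {x ∈ T | 0 ≤ x.1 ∧ 0 ≤ x.2.1} {x ∈ T | x.1 < 0 ∧ 0 ≤ x.2.1} :=
    Set.disjoint_left.mpr (fun x hx hx' => by have := hx.2.1; have := hx'.2.1; omega)
  have hd34 : Disjoint {x ∈ T | 0 ≤ x.1 ∧ x.2.1 < 0} {x ∈ T | x.1 < 0 ∧ x.2.1 < 0} :=
    Set.disjoint_left.mpr (fun x hx hx' => by have := hx.2.1; have := hx'.2.1; omega)
  have hd : Disjoint ({x ∈ T | 0 ≤ x.1 ∧ 0 ≤ x.2.1} ∪ {x ∈ T | x.1 < 0 ∧ 0 ≤ x.2.1})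
      ({x ∈ T | 0 ≤ x.1 ∧ x.2.1 < 0} ∪ {x ∈ T | x.1 < 0 ∧ x.2.1 < 0}) := by
    rw [Set.disjoint_left]
    rintro x (hx | hx) (hx' | hx') <;>
      · have := hx.2.2; have := hx'.2.2; omega
  rw [key1, hun,
    Set.ncard_union_eq hd ((hTfin.subset hsub1).union (hTfin.subset hsub2))
      ((hTfin.subset hsub3).union (hTfin.subset hsub4)),
    Set.ncard_union_eq hd12 (hTfin.subset hsub1) (hTfin.subset hsub2),
    Set.ncard_union_eq hd34 (hTfin.subset hsub3) (hTfin.subset hsub4),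
    k1, k2, k3, k4]
  ring

lemma part1 (N : ℕ) :
    RgCount 3 3 2 (2 * N : ℤ) = rPCount 3 4 4 (N : ℤ) + rGCount 3 2 2 ((N : ℤ) - 1) := by
  have hN : (0:ℤ) ≤ (N:ℤ) := Int.natCast_nonneg N
  set A : Set (ℤ×ℤ×ℤ) :=
    {x | ((N:ℤ) = 3*x.1^2 + 3*x.2.1^2 + oct x.2.2) ∧ (x.2.1 + x.2.2) % 2 = 0} with hA
  set B : Set (ℤ×ℤ×ℤ) :=
    {x | ((N:ℤ) = 3*x.1^2 + 3*x.2.1^2 + oct x.2.2) ∧ (x.2.1 + x.2.2) % 2 ≠ 0} with hB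
  set S : Set (ℤ×ℤ×ℤ) := {x | (N:ℤ) = 3*x.1^2 + 3*x.2.1^2 + oct x.2.2} with hS
  have hSfin : S.Finite := by
    apply finite_bdd (C := (N:ℤ)+1)
    rintro ⟨s,t,k⟩ hx
    simp only [hS, Set.mem_setOf_eq] at hx
    have h1 := oct_nonneg k
    have h2 : (0:ℤ) ≤ 2*k*(k+1) := by have := prod_succ_nonneg k; linarith
    have hs : s^2 ≤ (N:ℤ)+1 := by nlinarith [sq_nonneg t]
    have ht : t^2 ≤ (N:ℤ)+1 := by nlinarith [sq_nonneg s]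
    have hk : k^2 ≤ (N:ℤ)+1 := by nlinarith [sq_nonneg s, sq_nonneg t, oct_eq k]
    obtain ⟨a1,a2⟩ := sq_bnd (by linarith) hs
    obtain ⟨b1,b2⟩ := sq_bnd (by linarith) ht
    obtain ⟨c1,c2⟩ := sq_bnd (by linarith) hk
    exact ⟨a1,a2,b1,b2,c1,c2⟩
  have hAfin : A.Finite := hSfin.subset (fun x hx => hx.1)
  have hBfin : B.Finite := hSfin.subset (fun x hx => hx.1)
  have hdisj : Disjoint A B := Set.disjoint_left.mpr (fun x hx hx' => hx'.2 hx.2)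
  have hunion : S = A ∪ B := by
    ext x
    simp only [hS, hA, hB, Set.mem_setOf_eq, Set.mem_union]
    tauto
  -- Step 1 : RgCount = S.ncard
  have key1 : RgCount 3 3 2 (2 * N : ℤ) = S.ncard := by
    have hinj : Function.Injective (fun x : ℤ×ℤ×ℤ => (x.1 + x.2.1, x.1 - x.2.1, x.2.2)) := by
      rintro ⟨a,b,c⟩ ⟨d,e,f⟩ h
      simp only [Prod.mk.injEq] at h ⊢
      omega
    rw [Rg_norm, ← Set.ncard_image_of_injective S hinj]
    congr 1
    ext ⟨l,m,k⟩
    simp only [Set.mem_image, Set.mem_setOf_eq, Prod.mk.injEq, hS]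
    constructor
    · rintro h
      rcases Int.even_or_odd l with ⟨a,ha⟩ | ⟨a,ha⟩ <;>
        rcases Int.even_or_odd m with ⟨b,hb⟩ | ⟨b,hb⟩ <;> subst ha hb
      · refine ⟨(a+b, a-b, k), ?_, ?_, ?_, rfl⟩
        · show (N:ℤ) = 3*(a+b)^2 + 3*(a-b)^2 + oct k
          have h2 : 2*(N:ℤ) = 2*(3*(a+b)^2 + 3*(a-b)^2 + oct k) := by linear_combination h
          linarith
        · show (a+b) + (a-b) = a + a; ring
        · show (a+b) - (a-b) = b + b; ring
      · exfalso
        have h3 : 2*((N:ℤ) - oct k - 6*a^2 - 6*b^2 - 6*b) = 3 := by linear_combination h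
        exact absurd ⟨_, h3.symm⟩ (by norm_num : ¬ (2:ℤ) ∣ 3)
      · exfalso
        have h3 : 2*((N:ℤ) - oct k - 6*a^2 - 6*a - 6*b^2) = 3 := by linear_combination h
        exact absurd ⟨_, h3.symm⟩ (by norm_num : ¬ (2:ℤ) ∣ 3)
      · refine ⟨(a+b+1, a-b, k), ?_, ?_, ?_, rfl⟩
        · show (N:ℤ) = 3*(a+b+1)^2 + 3*(a-b)^2 + oct k
          have h2 : 2*(N:ℤ) = 2*(3*(a+b+1)^2 + 3*(a-b)^2 + oct k) := by linear_combination h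
          linarith
        · show (a+b+1) + (a-b) = 2*a + 1; ring
        · show (a+b+1) - (a-b) = 2*b + 1; ring
    · rintro ⟨⟨s,t,w⟩, hmem, h1, h2, h3⟩
      simp only at hmem h1 h2 h3
      subst h3
      rw [← h1, ← h2]
      linear_combination 2 * hmem
  -- Step 2 : A.ncard = rPCount
  have key2 : A.ncard = rPCount 3 4 4 (N : ℤ) := by
    have hinj : Function.Injective (fun x : ℤ×ℤ×ℤ => (x.1, x.2.1 - x.2.2, x.2.1 + x.2.2)) := by
      rintro ⟨a,b,c⟩ ⟨d,e,f⟩ h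
      simp only [Prod.mk.injEq] at h ⊢
      omega
    rw [rP_norm, ← Set.ncard_image_of_injective
      {x : ℤ×ℤ×ℤ | (N:ℤ) = 3*x.1^2 + 4*pent x.2.1 + 4*pent x.2.2} hinj]
    congr 1
    ext ⟨s,t,n⟩
    simp only [Set.mem_image, Set.mem_setOf_eq, Prod.mk.injEq, hA]
    constructor
    · rintro ⟨hmem, hpar⟩
      obtain ⟨j, hj⟩ : ∃ j, t + n = 2*j := ⟨(t+n)/2, by omega⟩
      refine ⟨(s, j, n - j), ?_, rfl, by show j - (n-j) = t; omega, by show j + (n-j) = n; omega⟩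
      show (N:ℤ) = 3*s^2 + 4*pent j + 4*pent (n-j)
      have ht : t = 2*j - n := by omega
      subst ht
      rw [oct_eq] at hmem
      linear_combination hmem - pent4 j - pent4 (n - j)
    · rintro ⟨⟨u,v,w⟩, hmem, h1, h2, h3⟩
      simp only at hmem h1 h2 h3
      subst h1 h2 h3
      constructor
      · rw [oct_eq]
        linear_combination hmem + pent4 v + pent4 w
      · omega
  -- Step 3 : B.ncard = rGCount
  have key3 : B.ncard = rGCount 3 2 2 ((N : ℤ) - 1) := by
    have hinj : Function.Injective
        (fun x : ℤ×ℤ×ℤ => (x.1, x.2.2 - x.2.1, -x.2.1 - x.2.2 - 1)) := by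
      rintro ⟨a,b,c⟩ ⟨d,e,f⟩ h
      simp only [Prod.mk.injEq] at h ⊢
      omega
    rw [rG_norm, ← Set.ncard_image_of_injective
      {x : ℤ×ℤ×ℤ | (N:ℤ) - 1 = 3*x.1^2 + 2*oct x.2.1 + 2*oct x.2.2} hinj]
    congr 1
    ext ⟨s,t,n⟩
    simp only [Set.mem_image, Set.mem_setOf_eq, Prod.mk.injEq, hB]
    constructor
    · rintro ⟨hmem, hpar⟩
      obtain ⟨j, hj⟩ : ∃ j, t + n = 2*j + 1 := ⟨(t+n-1)/2, by omega⟩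
      refine ⟨(s, -j-1, t - j - 1), ?_, rfl, by show (t-j-1) - (-j-1) = t; omega,
        by show -(-j-1) - (t-j-1) - 1 = n; omega⟩
      show (N:ℤ) - 1 = 3*s^2 + 2*oct (-j-1) + 2*oct (t-j-1)
      have hn : n = 2*j + 1 - t := by omega
      subst hn
      rw [oct_eq] at hmem
      rw [oct_eq, oct_eq]
      linear_combination hmem
    · rintro ⟨⟨u,v,w⟩, hmem, h1, h2, h3⟩
      simp only at hmem h1 h2 h3
      subst h1 h2 h3
      constructor
      · rw [oct_eq]
        rw [oct_eq, oct_eq] at hmem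
        linear_combination hmem
      · omega
  rw [key1, hunion, Set.ncard_union_eq hdisj hAfin hBfin, key2, key3]

theorem stmt11 (N : ℕ) :
    RgCount 3 3 2 (2 * N : ℤ) =
      rPCount 3 4 4 (N : ℤ) + rGCount 3 2 2 ((N : ℤ) - 1) ∧
    RgCount 3 3 2 (2 * N + 1 : ℤ) = 4 * TgCount 6 6 1 ((N : ℤ) - 1) := by
  exact ⟨part1 N, part2 N⟩
end

section
/- For each non-negative integer N: Rp(3,3,4;2N) = rP(3,1,1;N) − 2·rtg(3,6,1;N−1); Rp(3,3,4;4N+3) = 4·tpg(3,2,1;N); and Rp(3,3,4;4N+1) = 0. -/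
lemma two_mul_pent (n : ℤ) : 2 * pent n = 3*n^2 + n := by
  have h : (2:ℤ) ∣ n * (3*n+1) := by
    rcases Int.even_or_odd n with ⟨k,hk⟩|⟨k,hk⟩
    · exact ⟨k*(3*n+1), by rw [hk]; ring⟩
    · exact ⟨n*(3*k+2), by rw [hk]; ring⟩
  unfold pent; rw [Int.mul_ediv_cancel' h]; ring

lemma two_mul_tri (m : ℕ) : 2 * tri m = m * (m+1) :=
  Nat.mul_div_cancel' (even_iff_two_dvd.mp (Nat.even_mul_succ_self m))

lemma two_mul_tri' (m : ℕ) : 2 * (tri m : ℤ) = (m:ℤ) * ((m:ℤ)+1) := by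
  exact_mod_cast congrArg (Nat.cast : ℕ → ℤ) (two_mul_tri m)

lemma sq_mod (l : ℤ) : ∃ a, l^2 = 2*a + l := by
  obtain ⟨k, hk⟩ := Int.even_mul_succ_self l
  exact ⟨k - l, by nlinarith⟩

lemma ncard_bijOn {α β : Type*} {f : α → β} {A : Set α} {B : Set β} (h : Set.BijOn f A B) :
    A.ncard = B.ncard := by
  rw [← Nat.card_coe_set_eq, ← Nat.card_coe_set_eq]
  exact Nat.card_congr (h.equiv f)

lemma mem_Icc_of_sq_le {l M : ℤ} (h : l^2 ≤ M) : l ∈ Set.Icc (-(M+1)) (M+1) := by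
  constructor <;> nlinarith [sq_nonneg (l+1), sq_nonneg (l-1)]

lemma finite_of_sq_le {S : Set (ℤ×ℤ×ℤ)} (B : ℤ)
    (h : ∀ x ∈ S, x.1^2 ≤ B ∧ x.2.1^2 ≤ B ∧ x.2.2^2 ≤ B) : S.Finite := by
  apply Set.Finite.subset ((Set.finite_Icc (-(B+1)) (B+1)).prod
    (((Set.finite_Icc (-(B+1)) (B+1))).prod (Set.finite_Icc (-(B+1)) (B+1))))
  intro x hx
  obtain ⟨h1,h2,h3⟩ := h x hx
  exact ⟨mem_Icc_of_sq_le h1, mem_Icc_of_sq_le h2, mem_Icc_of_sq_le h3⟩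

lemma mul_succ_nonneg (l : ℤ) : 0 ≤ l*(l+1) := by
  rcases le_or_gt 0 l with h|h <;> nlinarith

lemma pent2_nonneg (l : ℤ) : 0 ≤ 3*l^2 + l := by
  rcases le_or_gt 0 l with h|h <;> nlinarith

lemma oct_nonneg' (l : ℤ) : 0 ≤ 3*l^2 + 2*l := by
  rcases le_or_gt 0 l with h|h <;> nlinarith

lemma part1_s12 (M : ℤ) :
    {x : ℤ×ℤ×ℤ | M = 3*x.1^2 + pent x.2.1 + pent x.2.2}.ncard
      = {x : ℤ×ℤ×ℤ | 2*M = 3*x.1^2 + 3*x.2.1^2 + 4*pent x.2.2}.ncard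
        + 2 * {x : ℤ×ℕ×ℤ | M - 1 = 3*x.1^2 + 6*(tri x.2.1 : ℤ) + oct x.2.2}.ncard := by
  set A : Set (ℤ×ℤ×ℤ) := {x | 2*M = 3*x.1^2 + 3*x.2.1^2 + 4*pent x.2.2} with hA
  set A2 : Set (ℤ×ℤ×ℤ) := {x | M = 3*x.1^2 + 3*x.2.1^2 + 2*pent x.2.2} with hA2
  set Bb : Set (ℤ×ℤ×ℤ) := {x | M = 3*x.1^2 + pent x.2.1 + pent x.2.2} with hBb
  set B0 : Set (ℤ×ℤ×ℤ) := {x | (M = 3*x.1^2 + pent x.2.1 + pent x.2.2) ∧ (x.2.1 - x.2.2) % 2 = 0} with hB0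
  set B1 : Set (ℤ×ℤ×ℤ) := {x | (M = 3*x.1^2 + pent x.2.1 + pent x.2.2) ∧ (x.2.1 - x.2.2) % 2 ≠ 0} with hB1
  set D : Set (ℤ×ℤ×ℤ) := {x | M - 1 = 3*x.1^2 + 3*x.2.1^2 + 3*x.2.1 + oct x.2.2} with hD
  set D0 : Set (ℤ×ℤ×ℤ) := {x | (M - 1 = 3*x.1^2 + 3*x.2.1^2 + 3*x.2.1 + oct x.2.2) ∧ 0 ≤ x.2.1} with hD0
  set D1 : Set (ℤ×ℤ×ℤ) := {x | (M - 1 = 3*x.1^2 + 3*x.2.1^2 + 3*x.2.1 + oct x.2.2) ∧ x.2.1 < 0} with hD1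
  set C : Set (ℤ×ℕ×ℤ) := {x | M - 1 = 3*x.1^2 + 6*(tri x.2.1 : ℤ) + oct x.2.2} with hC
  -- A2 ≃ A
  have bijA : Set.BijOn (fun x : ℤ×ℤ×ℤ => (x.1 + x.2.1, x.1 - x.2.1, x.2.2)) A2 A := by
    refine ⟨?_, ?_, ?_⟩
    · rintro ⟨u,v,n⟩ h
      simp only [hA2, hA, Set.mem_setOf_eq] at h ⊢
      linear_combination 2*h
    · rintro ⟨u,v,n⟩ _ ⟨u',v',n'⟩ _ h
      simp only [Prod.mk.injEq] at h ⊢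
      refine ⟨by omega, by omega, h.2.2⟩
    · rintro ⟨l,m,n⟩ h
      simp only [hA, Set.mem_setOf_eq] at h
      have hp := two_mul_pent n
      obtain ⟨a, ha⟩ := sq_mod l
      obtain ⟨b, hb⟩ := sq_mod m
      have h' := h
      rw [ha, hb] at h'
      obtain ⟨u, hu⟩ : ∃ u, l + m = 2*u := ⟨(l+m)/2, by omega⟩
      obtain ⟨v, hv⟩ : ∃ v, l - m = 2*v := ⟨(l-m)/2, by omega⟩
      refine ⟨(u, v, n), ?_, ?_⟩
      · simp only [hA2, Set.mem_setOf_eq]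
        have hl : l = u + v := by omega
        have hm : m = u - v := by omega
        rw [hl, hm] at h
        linarith [h]
      · simp only [Prod.mk.injEq]
        refine ⟨?_, ?_, ?_⟩ <;> first | trivial | omega
  -- A2 ≃ B0
  have bijB0 : Set.BijOn (fun x : ℤ×ℤ×ℤ => (x.1, x.2.2 + x.2.1, x.2.2 - x.2.1)) A2 B0 := by
    refine ⟨?_, ?_, ?_⟩
    · rintro ⟨u,v,n⟩ h
      simp only [hA2, hB0, Set.mem_setOf_eq] at h ⊢
      constructor
      · have p0 := two_mul_pent n
        have p1 := two_mul_pent (n+v)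
        have p2 := two_mul_pent (n-v)
        ring_nf at p0 p1 p2 h ⊢
        linarith
      · omega
    · rintro ⟨u,v,n⟩ _ ⟨u',v',n'⟩ _ h
      simp only [Prod.mk.injEq] at h ⊢
      refine ⟨h.1, by omega, by omega⟩
    · rintro ⟨l,m,n⟩ h
      simp only [hB0, Set.mem_setOf_eq] at h
      obtain ⟨h, hpar⟩ := h
      obtain ⟨v, hv⟩ : ∃ v, m - n = 2*v := ⟨(m-n)/2, by omega⟩
      obtain ⟨w, hw⟩ : ∃ w, m + n = 2*w := ⟨(m+n)/2, by omega⟩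
      have hm : m = w + v := by omega
      have hn : n = w - v := by omega
      refine ⟨(l, v, w), ?_, ?_⟩
      · simp only [hA2, Set.mem_setOf_eq]
        rw [hm, hn] at h
        have p0 := two_mul_pent w
        have p1 := two_mul_pent (w+v)
        have p2 := two_mul_pent (w-v)
        ring_nf at p0 p1 p2 h ⊢
        linarith
      · simp only [Prod.mk.injEq]
        refine ⟨?_, ?_, ?_⟩ <;> first | trivial | omega
  -- D ≃ B1
  have bijB1 : Set.BijOn (fun x : ℤ×ℤ×ℤ => (x.1, x.2.1 - x.2.2, -x.2.2 - x.2.1 - 1)) D B1 := by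
    refine ⟨?_, ?_, ?_⟩
    · rintro ⟨l,b,k⟩ h
      simp only [hD, hB1, Set.mem_setOf_eq] at h ⊢
      rw [oct_eq] at h
      constructor
      · have p1 := two_mul_pent (b - k)
        have p2 := two_mul_pent (-k - b - 1)
        ring_nf at p1 p2 h ⊢
        linarith
      · omega
    · rintro ⟨l,b,k⟩ _ ⟨l',b',k'⟩ _ h
      simp only [Prod.mk.injEq] at h ⊢
      refine ⟨h.1, by omega, by omega⟩
    · rintro ⟨l,m,n⟩ h
      simp only [hB1, Set.mem_setOf_eq] at h
      obtain ⟨h, hpar⟩ := h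
      obtain ⟨b, hb⟩ : ∃ b, m - n = 2*b + 1 := ⟨(m-n-1)/2, by omega⟩
      obtain ⟨k, hk⟩ : ∃ k, m + n = -2*k - 1 := ⟨(-m-n-1)/2, by omega⟩
      have hm : m = b - k := by omega
      have hn : n = -k - b - 1 := by omega
      refine ⟨(l, b, k), ?_, ?_⟩
      · simp only [hD, Set.mem_setOf_eq]
        rw [hm, hn] at h
        rw [oct_eq]
        have p1 := two_mul_pent (b - k)
        have p2 := two_mul_pent (-k - b - 1)
        ring_nf at p1 p2 h ⊢
        linarith
      · simp only [Prod.mk.injEq]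
        refine ⟨?_, ?_, ?_⟩ <;> first | trivial | omega
  -- C ≃ D0
  have bijD0 : Set.BijOn (fun x : ℤ×ℕ×ℤ => (x.1, (x.2.1 : ℤ), x.2.2)) C D0 := by
    refine ⟨?_, ?_, ?_⟩
    · rintro ⟨l,m,k⟩ h
      simp only [hC, hD0, Set.mem_setOf_eq] at h ⊢
      have t := two_mul_tri' m
      constructor
      · ring_nf at t h ⊢; linarith
      · positivity
    · rintro ⟨l,m,k⟩ _ ⟨l',m',k'⟩ _ h
      simp only [Prod.mk.injEq] at h ⊢
      refine ⟨h.1, by omega, h.2.2⟩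
    · rintro ⟨l,b,k⟩ h
      simp only [hD0, Set.mem_setOf_eq] at h
      obtain ⟨h, hb⟩ := h
      have hbn : ((b.toNat : ℤ)) = b := Int.toNat_of_nonneg hb
      refine ⟨(l, b.toNat, k), ?_, ?_⟩
      · simp only [hC, Set.mem_setOf_eq]
        have t := two_mul_tri' b.toNat
        rw [hbn] at t
        ring_nf at t h ⊢; linarith
      · simp only [Prod.mk.injEq]
        refine ⟨?_, ?_, ?_⟩ <;> first | trivial | exact hbn
  -- C ≃ D1
  have bijD1 : Set.BijOn (fun x : ℤ×ℕ×ℤ => (x.1, -1 - (x.2.1 : ℤ), x.2.2)) C D1 := by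
    refine ⟨?_, ?_, ?_⟩
    · rintro ⟨l,m,k⟩ h
      simp only [hC, hD1, Set.mem_setOf_eq] at h ⊢
      have t := two_mul_tri' m
      constructor
      · ring_nf at t h ⊢; linarith
      · have : (0:ℤ) ≤ (m:ℤ) := by positivity
        omega
    · rintro ⟨l,m,k⟩ _ ⟨l',m',k'⟩ _ h
      simp only [Prod.mk.injEq] at h ⊢
      refine ⟨h.1, by omega, h.2.2⟩
    · rintro ⟨l,b,k⟩ h
      simp only [hD1, Set.mem_setOf_eq] at h
      obtain ⟨h, hb⟩ := h
      have hbn : (((-1 - b).toNat : ℤ)) = -1 - b := Int.toNat_of_nonneg (by omega)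
      refine ⟨(l, (-1 - b).toNat, k), ?_, ?_⟩
      · simp only [hC, Set.mem_setOf_eq]
        have t := two_mul_tri' (-1 - b).toNat
        rw [hbn] at t
        ring_nf at t h ⊢; linarith
      · simp only [Prod.mk.injEq]
        refine ⟨?_, ?_, ?_⟩ <;> first | trivial | omega
  -- finiteness
  have finBb : Bb.Finite := by
    apply finite_of_sq_le (2*M)
    rintro ⟨l,m,n⟩ h
    simp only [hBb, Set.mem_setOf_eq] at h
    have p1 := two_mul_pent m
    have p2 := two_mul_pent n
    have q1 := pent2_nonneg m
    have q2 := pent2_nonneg n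
    refine ⟨by nlinarith, by nlinarith, by nlinarith⟩
  have finD : D.Finite := by
    apply finite_of_sq_le (2*M)
    rintro ⟨l,b,k⟩ h
    simp only [hD, Set.mem_setOf_eq] at h
    rw [oct_eq] at h
    have q1 := mul_succ_nonneg b
    have q2 := oct_nonneg' k
    refine ⟨by nlinarith, by nlinarith, by nlinarith⟩
  have finB0 : B0.Finite := finBb.subset (fun x hx => hx.1)
  have finB1 : B1.Finite := finBb.subset (fun x hx => hx.1)
  have finD0 : D0.Finite := finD.subset (fun x hx => hx.1)
  have finD1 : D1.Finite := finD.subset (fun x hx => hx.1)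
  -- unions
  have hBbsplit : Bb = B0 ∪ B1 := by
    ext x; simp only [hBb, hB0, hB1, Set.mem_setOf_eq, Set.mem_union]; tauto
  have hDsplit : D = D0 ∪ D1 := by
    ext x; simp only [hD, hD0, hD1, Set.mem_setOf_eq, Set.mem_union]
    constructor
    · intro h; rcases le_or_gt 0 x.2.1 with h2|h2; exact Or.inl ⟨h, h2⟩; exact Or.inr ⟨h, h2⟩
    · rintro (⟨h,_⟩|⟨h,_⟩) <;> exact h
  have hBbcard : Bb.ncard = B0.ncard + B1.ncard := by
    rw [hBbsplit]
    apply Set.ncard_union_eq _ finB0 finB1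
    rw [Set.disjoint_left]
    rintro x ⟨_, h1⟩ ⟨_, h2⟩; exact h2 h1
  have hDcard : D.ncard = D0.ncard + D1.ncard := by
    rw [hDsplit]
    apply Set.ncard_union_eq _ finD0 finD1
    rw [Set.disjoint_left]
    rintro x ⟨_, h1⟩ ⟨_, h2⟩; omega
  have e1 : A2.ncard = A.ncard := ncard_bijOn bijA
  have e2 : A2.ncard = B0.ncard := ncard_bijOn bijB0
  have e3 : D.ncard = B1.ncard := ncard_bijOn bijB1
  have e4 : C.ncard = D0.ncard := ncard_bijOn bijD0
  have e5 : C.ncard = D1.ncard := ncard_bijOn bijD1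
  show Bb.ncard = A.ncard + 2 * C.ncard
  omega

lemma part2_s12 (M : ℤ) :
    {x : ℤ×ℤ×ℤ | 4*M+3 = 3*x.1^2 + 3*x.2.1^2 + 4*pent x.2.2}.ncard
      = 4 * {x : ℕ×ℤ×ℤ | M = 3*(tri x.1 : ℤ) + 2*pent x.2.1 + oct x.2.2}.ncard := by
  set A : Set (ℤ×ℤ×ℤ) := {x | 4*M+3 = 3*x.1^2 + 3*x.2.1^2 + 4*pent x.2.2} with hA
  set A0 : Set (ℤ×ℤ×ℤ) := {x | (4*M+3 = 3*x.1^2 + 3*x.2.1^2 + 4*pent x.2.2) ∧ x.1 % 2 = 0} with hA0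
  set A1 : Set (ℤ×ℤ×ℤ) := {x | (4*M+3 = 3*x.1^2 + 3*x.2.1^2 + 4*pent x.2.2) ∧ x.1 % 2 ≠ 0} with hA1
  set E : Set (ℤ×ℤ×ℤ) := {x | (24*M+19 = x.1^2 + x.2.1^2 + x.2.2^2) ∧ x.1 % 6 = 3 ∧
    x.2.1 % 6 = 3 ∧ (x.1 - x.2.1) % 12 = 0 ∧ x.2.2 % 6 = 1} with hE
  set T : Set (ℤ×ℤ×ℤ) := {x | (24*M+19 = x.1^2 + x.2.1^2 + x.2.2^2) ∧ x.1 % 6 = 3 ∧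
    x.2.1 % 6 = 3 ∧ (x.2.1 - x.2.2) % 4 = 0 ∧ x.2.2 % 6 = 5} with hT
  set W : Set (ℤ×ℤ×ℤ) := {x | 2*M = 3*x.1^2 + 3*x.1 + 6*x.2.1^2 + 2*x.2.1 + 6*x.2.2^2 + 4*x.2.2} with hW
  set W0 : Set (ℤ×ℤ×ℤ) := {x | (2*M = 3*x.1^2 + 3*x.1 + 6*x.2.1^2 + 2*x.2.1 + 6*x.2.2^2 + 4*x.2.2) ∧ 0 ≤ x.1} with hW0
  set W1 : Set (ℤ×ℤ×ℤ) := {x | (2*M = 3*x.1^2 + 3*x.1 + 6*x.2.1^2 + 2*x.2.1 + 6*x.2.2^2 + 4*x.2.2) ∧ x.1 < 0} with hW1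
  set G : Set (ℕ×ℤ×ℤ) := {x | M = 3*(tri x.1 : ℤ) + 2*pent x.2.1 + oct x.2.2} with hG
  -- A0 ≃ A1 by swapping
  have bij01 : Set.BijOn (fun x : ℤ×ℤ×ℤ => (x.2.1, x.1, x.2.2)) A0 A1 := by
    refine ⟨?_, ?_, ?_⟩
    · rintro ⟨l,m,n⟩ hmem
      simp only [hA0, Set.mem_setOf_eq] at hmem
      obtain ⟨h, hl⟩ := hmem
      simp only [hA1, Set.mem_setOf_eq]
      have hp := two_mul_pent n
      obtain ⟨a, ha⟩ := sq_mod l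
      obtain ⟨b, hb⟩ := sq_mod m
      have h' := h; rw [ha, hb] at h'
      exact ⟨by linarith, by omega⟩
    · rintro ⟨l,m,n⟩ _ ⟨l',m',n'⟩ _ h
      simp only [Prod.mk.injEq] at h ⊢
      exact ⟨h.2.1, h.1, h.2.2⟩
    · rintro ⟨l,m,n⟩ hmem
      simp only [hA1, Set.mem_setOf_eq] at hmem
      obtain ⟨h, hl⟩ := hmem
      have hp := two_mul_pent n
      obtain ⟨a, ha⟩ := sq_mod l
      obtain ⟨b, hb⟩ := sq_mod m
      have h' := h; rw [ha, hb] at h'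
      refine ⟨(m, l, n), ?_, ?_⟩
      · simp only [hA0, Set.mem_setOf_eq]
        exact ⟨by linarith, by omega⟩
      · simp
  -- A1 ≃ E
  have bijE : Set.BijOn (fun x : ℤ×ℤ×ℤ => (3*x.1 + 3*x.2.1, 3*x.1 - 3*x.2.1, 6*x.2.2 + 1)) A1 E := by
    refine ⟨?_, ?_, ?_⟩
    · rintro ⟨l,m,n⟩ hmem
      simp only [hA1, Set.mem_setOf_eq] at hmem
      obtain ⟨h, hl⟩ := hmem
      simp only [hE, Set.mem_setOf_eq]
      have hp := two_mul_pent n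
      obtain ⟨a, ha⟩ := sq_mod l
      obtain ⟨b, hb⟩ := sq_mod m
      have h' := h; rw [ha, hb] at h'
      refine ⟨by ring_nf; ring_nf at h hp; linarith, by omega, by omega, by omega, by omega⟩
    · rintro ⟨l,m,n⟩ _ ⟨l',m',n'⟩ _ h
      simp only [Prod.mk.injEq] at h ⊢
      refine ⟨by omega, by omega, by omega⟩
    · rintro ⟨s,t,c⟩ hmem
      simp only [hE, Set.mem_setOf_eq] at hmem
      obtain ⟨h, hs, ht, hst, hc⟩ := hmem
      obtain ⟨n, hn⟩ : ∃ n, c = 6*n + 1 := ⟨(c-1)/6, by omega⟩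
      obtain ⟨l, hl⟩ : ∃ l, s + t = 6*l := ⟨(s+t)/6, by omega⟩
      obtain ⟨m, hm⟩ : ∃ m, s - t = 6*m := ⟨(s-t)/6, by omega⟩
      have hs' : s = 3*l + 3*m := by omega
      have ht' : t = 3*l - 3*m := by omega
      refine ⟨(l, m, n), ?_, ?_⟩
      · simp only [hA1, Set.mem_setOf_eq]
        constructor
        · have hp := two_mul_pent n
          rw [hs', ht', hn] at h
          ring_nf at h hp ⊢
          linarith
        · omega
      · simp only [Prod.mk.injEq]
        refine ⟨by omega, by omega, by omega⟩
  -- E ≃ T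
  have bijT : Set.BijOn (fun x : ℤ×ℤ×ℤ =>
      (x.2.1, if (x.1 + x.2.2) % 4 = 0 then x.1 else -x.1, -x.2.2)) E T := by
    refine ⟨?_, ?_, ?_⟩
    · rintro ⟨s,t,c⟩ hmem
      simp only [hE, Set.mem_setOf_eq] at hmem
      obtain ⟨h, hs, ht, hst, hc⟩ := hmem
      simp only [hT, Set.mem_setOf_eq]
      by_cases h4 : (s + c) % 4 = 0 <;> simp only [h4, if_true, if_false, reduceIte]
      · exact ⟨by ring_nf; ring_nf at h; linarith, by omega, by omega, by omega, by omega⟩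
      · exact ⟨by ring_nf; ring_nf at h; linarith, by omega, by omega, by omega, by omega⟩
    · rintro ⟨s,t,c⟩ hm1 ⟨s',t',c'⟩ hm2 heq
      simp only [hE, Set.mem_setOf_eq] at hm1 hm2
      obtain ⟨h, hs, ht, hst, hc⟩ := hm1
      obtain ⟨h', hs', ht', hst', hc'⟩ := hm2
      simp only [Prod.mk.injEq] at heq ⊢
      obtain ⟨e1, e2, e3⟩ := heq
      by_cases h4 : (s + c) % 4 = 0 <;> by_cases h5 : (s' + c') % 4 = 0 <;>
        simp only [h4, h5, if_true, if_false, reduceIte] at e2 <;>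
        refine ⟨by omega, by omega, by omega⟩
    · rintro ⟨w,u,v⟩ hmem
      simp only [hT, Set.mem_setOf_eq] at hmem
      obtain ⟨h, hw, hu, huv, hv⟩ := hmem
      refine ⟨(if (u - w) % 12 = 0 then u else -u, w, -v), ?_, ?_⟩
      · simp only [hE, Set.mem_setOf_eq]
        refine ⟨?_, ?_, ?_, ?_, ?_⟩
        · by_cases h12 : (u - w) % 12 = 0 <;> simp only [h12, if_true, if_false, reduceIte] <;>
            (ring_nf; ring_nf at h; linarith)
        · by_cases h12 : (u - w) % 12 = 0 <;> simp only [h12, if_true, if_false, reduceIte] <;> omega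
        · omega
        · by_cases h12 : (u - w) % 12 = 0 <;> simp only [h12, if_true, if_false, reduceIte] <;> omega
        · omega
      · simp only [Prod.mk.injEq]
        by_cases h12 : (u - w) % 12 = 0 <;> simp only [h12, if_true, if_false, reduceIte]
        · have h4 : (u + -v) % 4 = 0 := by omega
          simp only [h4, reduceIte]
          refine ⟨?_, ?_, ?_⟩ <;> first | trivial | omega
        · have h4 : (-u + -v) % 4 ≠ 0 := by omega
          simp only [h4, reduceIte]
          refine ⟨?_, ?_, ?_⟩ <;> first | trivial | omega
  -- W ≃ T
  have bijW : Set.BijOn (fun x : ℤ×ℤ×ℤ =>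
      (6*x.1 + 3, 6*x.2.1 + 6*x.2.2 + 3, 6*x.2.1 - 6*x.2.2 - 1)) W T := by
    refine ⟨?_, ?_, ?_⟩
    · rintro ⟨l,m,k⟩ hmem
      simp only [hW, Set.mem_setOf_eq] at hmem
      simp only [hT, Set.mem_setOf_eq]
      refine ⟨by ring_nf; ring_nf at hmem; linarith, by omega, by omega, by omega, by omega⟩
    · rintro ⟨l,m,k⟩ _ ⟨l',m',k'⟩ _ h
      simp only [Prod.mk.injEq] at h ⊢
      refine ⟨by omega, by omega, by omega⟩
    · rintro ⟨w,u,v⟩ hmem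
      simp only [hT, Set.mem_setOf_eq] at hmem
      obtain ⟨h, hw, hu, huv, hv⟩ := hmem
      obtain ⟨l, hl⟩ : ∃ l, w = 6*l + 3 := ⟨(w-3)/6, by omega⟩
      obtain ⟨m, hm⟩ : ∃ m, u + v = 12*m + 2 := ⟨(u+v-2)/12, by omega⟩
      obtain ⟨k, hk⟩ : ∃ k, u - v = 12*k + 4 := ⟨(u-v-4)/12, by omega⟩
      have hu' : u = 6*m + 6*k + 3 := by omega
      have hv' : v = 6*m - 6*k - 1 := by omega
      refine ⟨(l, m, k), ?_, ?_⟩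
      · simp only [hW, Set.mem_setOf_eq]
        rw [hl, hu', hv'] at h
        ring_nf at h ⊢
        linarith
      · simp only [Prod.mk.injEq]
        refine ⟨by omega, by omega, by omega⟩
  -- G ≃ W0
  have bijW0 : Set.BijOn (fun x : ℕ×ℤ×ℤ => ((x.1 : ℤ), x.2.1, x.2.2)) G W0 := by
    refine ⟨?_, ?_, ?_⟩
    · rintro ⟨l,m,k⟩ hmem
      simp only [hG, Set.mem_setOf_eq] at hmem
      simp only [hW0, Set.mem_setOf_eq]
      have t := two_mul_tri' l
      have hp := two_mul_pent m
      rw [oct_eq] at hmem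
      exact ⟨by ring_nf; ring_nf at t hp hmem; linarith, by positivity⟩
    · rintro ⟨l,m,k⟩ _ ⟨l',m',k'⟩ _ h
      simp only [Prod.mk.injEq] at h ⊢
      refine ⟨by omega, h.2.1, h.2.2⟩
    · rintro ⟨l,m,k⟩ hmem
      simp only [hW0, Set.mem_setOf_eq] at hmem
      obtain ⟨h, hl⟩ := hmem
      have hln : ((l.toNat : ℤ)) = l := Int.toNat_of_nonneg hl
      refine ⟨(l.toNat, m, k), ?_, ?_⟩
      · simp only [hG, Set.mem_setOf_eq]
        have t := two_mul_tri' l.toNat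
        rw [hln] at t
        have hp := two_mul_pent m
        rw [oct_eq]
        ring_nf; ring_nf at t hp h; linarith
      · simp only [Prod.mk.injEq]
        simpa using hln
  -- G ≃ W1
  have bijW1 : Set.BijOn (fun x : ℕ×ℤ×ℤ => (-1 - (x.1 : ℤ), x.2.1, x.2.2)) G W1 := by
    refine ⟨?_, ?_, ?_⟩
    · rintro ⟨l,m,k⟩ hmem
      simp only [hG, Set.mem_setOf_eq] at hmem
      simp only [hW1, Set.mem_setOf_eq]
      have t := two_mul_tri' l
      have hp := two_mul_pent m
      rw [oct_eq] at hmem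
      have hl0 : (0:ℤ) ≤ (l:ℤ) := by positivity
      exact ⟨by ring_nf; ring_nf at t hp hmem; linarith, by omega⟩
    · rintro ⟨l,m,k⟩ _ ⟨l',m',k'⟩ _ h
      simp only [Prod.mk.injEq] at h ⊢
      refine ⟨by omega, h.2.1, h.2.2⟩
    · rintro ⟨l,m,k⟩ hmem
      simp only [hW1, Set.mem_setOf_eq] at hmem
      obtain ⟨h, hl⟩ := hmem
      have hln : (((-1-l).toNat : ℤ)) = -1-l := Int.toNat_of_nonneg (by omega)
      refine ⟨((-1-l).toNat, m, k), ?_, ?_⟩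
      · simp only [hG, Set.mem_setOf_eq]
        have t := two_mul_tri' (-1-l).toNat
        rw [hln] at t
        have hp := two_mul_pent m
        rw [oct_eq]
        ring_nf; ring_nf at t hp h; linarith
      · simp only [Prod.mk.injEq, hln]
        exact ⟨by ring, trivial⟩
  -- finiteness
  have finA : A.Finite := by
    apply finite_of_sq_le (4*M+3)
    rintro ⟨l,m,n⟩ h
    simp only [hA, Set.mem_setOf_eq] at h
    have hp := two_mul_pent n
    have q1 := pent2_nonneg n
    refine ⟨by nlinarith, by nlinarith, by nlinarith⟩
  have finW : W.Finite := by
    apply finite_of_sq_le (2*M+1)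
    rintro ⟨l,m,k⟩ h
    simp only [hW, Set.mem_setOf_eq] at h
    have q1 := mul_succ_nonneg l
    have q2 := pent2_nonneg m
    have q3 := oct_nonneg' k
    refine ⟨by nlinarith, by nlinarith, by nlinarith⟩
  have finA0 : A0.Finite := finA.subset (fun x hx => hx.1)
  have finA1 : A1.Finite := finA.subset (fun x hx => hx.1)
  have finW0 : W0.Finite := finW.subset (fun x hx => hx.1)
  have finW1 : W1.Finite := finW.subset (fun x hx => hx.1)
  have hAsplit : A = A0 ∪ A1 := by
    ext x; simp only [hA, hA0, hA1, Set.mem_setOf_eq, Set.mem_union]; tauto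
  have hWsplit : W = W0 ∪ W1 := by
    ext x; simp only [hW, hW0, hW1, Set.mem_setOf_eq, Set.mem_union]
    constructor
    · intro h; rcases le_or_gt 0 x.1 with h2|h2; exact Or.inl ⟨h, h2⟩; exact Or.inr ⟨h, h2⟩
    · rintro (⟨h,_⟩|⟨h,_⟩) <;> exact h
  have hAcard : A.ncard = A0.ncard + A1.ncard := by
    rw [hAsplit]
    apply Set.ncard_union_eq _ finA0 finA1
    rw [Set.disjoint_left]; rintro x ⟨_, h1⟩ ⟨_, h2⟩; exact h2 h1
  have hWcard : W.ncard = W0.ncard + W1.ncard := by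
    rw [hWsplit]
    apply Set.ncard_union_eq _ finW0 finW1
    rw [Set.disjoint_left]; rintro x ⟨_, h1⟩ ⟨_, h2⟩; omega
  have e1 : A0.ncard = A1.ncard := ncard_bijOn bij01
  have e2 : A1.ncard = E.ncard := ncard_bijOn bijE
  have e3 : E.ncard = T.ncard := ncard_bijOn bijT
  have e4 : W.ncard = T.ncard := ncard_bijOn bijW
  have e5 : G.ncard = W0.ncard := ncard_bijOn bijW0
  have e6 : G.ncard = W1.ncard := ncard_bijOn bijW1
  show A.ncard = 4 * G.ncard
  omega

lemma zmod8 : ∀ x y z : ZMod 8, 18*x^2+18*y^2+(6*z+1)^2 ≠ 7 := by decide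

lemma part3 (M : ℤ) :
    {x : ℤ×ℤ×ℤ | 4*M+1 = 3*x.1^2 + 3*x.2.1^2 + 4*pent x.2.2} = ∅ := by
  ext ⟨l,m,n⟩
  simp only [Set.mem_setOf_eq, Set.mem_empty_iff_false, iff_false]
  intro h
  have hp := two_mul_pent n
  have key : 24*M+7 = 18*l^2 + 18*m^2 + (6*n+1)^2 := by ring_nf; ring_nf at h hp; linarith
  have h8 : ((24*M+7 : ℤ) : ZMod 8) = 18*(l:ZMod 8)^2 + 18*(m:ZMod 8)^2 + (6*(n:ZMod 8)+1)^2 := by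
    rw [key]; push_cast; ring
  have h7 : ((24*M+7 : ℤ) : ZMod 8) = 7 := by
    push_cast
    have h24 : (24 : ZMod 8) = 0 := by decide
    rw [h24]; ring
  exact zmod8 _ _ _ (h8.symm.trans h7)

theorem stmt12 (N : ℕ) :
    (RpCount 3 3 4 (2 * N : ℤ) : ℤ) =
      (rPCount 3 1 1 (N : ℤ) : ℤ) - 2 * (rtgCount 3 6 1 ((N : ℤ) - 1) : ℤ) ∧
    RpCount 3 3 4 (4 * N + 3 : ℤ) = 4 * tpgCount 3 2 1 (N : ℤ) ∧
    RpCount 3 3 4 (4 * N + 1 : ℤ) = 0 := by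
  have eR1 : RpCount 3 3 4 (2 * N : ℤ) =
      {x : ℤ×ℤ×ℤ | 2*(N:ℤ) = 3*x.1^2 + 3*x.2.1^2 + 4*pent x.2.2}.ncard := by
    unfold RpCount; norm_num
  have eP : rPCount 3 1 1 (N : ℤ) =
      {x : ℤ×ℤ×ℤ | (N:ℤ) = 3*x.1^2 + pent x.2.1 + pent x.2.2}.ncard := by
    unfold rPCount; norm_num
  have eT : rtgCount 3 6 1 ((N:ℤ) - 1) =
      {x : ℤ×ℕ×ℤ | (N:ℤ) - 1 = 3*x.1^2 + 6*(tri x.2.1 : ℤ) + oct x.2.2}.ncard := by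
    unfold rtgCount; norm_num
  have eR2 : RpCount 3 3 4 (4 * N + 3 : ℤ) =
      {x : ℤ×ℤ×ℤ | 4*(N:ℤ)+3 = 3*x.1^2 + 3*x.2.1^2 + 4*pent x.2.2}.ncard := by
    unfold RpCount; norm_num
  have eG : tpgCount 3 2 1 (N : ℤ) =
      {x : ℕ×ℤ×ℤ | (N:ℤ) = 3*(tri x.1 : ℤ) + 2*pent x.2.1 + oct x.2.2}.ncard := by
    unfold tpgCount; norm_num
  have eR3 : RpCount 3 3 4 (4 * N + 1 : ℤ) =
      {x : ℤ×ℤ×ℤ | 4*(N:ℤ)+1 = 3*x.1^2 + 3*x.2.1^2 + 4*pent x.2.2}.ncard := by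
    unfold RpCount; norm_num
  have h1 := part1_s12 (N:ℤ)
  have h2 := part2_s12 (N:ℤ)
  have h3 := part3 (N:ℤ)
  refine ⟨?_, ?_, ?_⟩
  · rw [eR1, eP, eT]
    omega
  · rw [eR2, eG]
    exact h2
  · rw [eR3, h3]
    exact Set.ncard_empty _
end

section
/- For each non-negative integer N: r(1,1,1;N) = r(1,1,4;N) + r(1,4,4;4N) − r(1,4,16;4N). -/
lemma key4 (b c : ℕ) (N : ℤ) :
    rCount 1 (4 * b) (4 * c) (4 * N) = rCount 1 b c N := by
  unfold rCount
  have himg : {x : ℤ × ℤ × ℤ | (4 * N : ℤ) =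
        ((1 : ℕ) : ℤ) * x.1 ^ 2 + ((4 * b : ℕ) : ℤ) * x.2.1 ^ 2 + ((4 * c : ℕ) : ℤ) * x.2.2 ^ 2}
      = (fun x : ℤ × ℤ × ℤ => (2 * x.1, x.2)) ''
        {x : ℤ × ℤ × ℤ | (N : ℤ) = ((1 : ℕ) : ℤ) * x.1 ^ 2 + (b : ℤ) * x.2.1 ^ 2 + (c : ℤ) * x.2.2 ^ 2} := by
    ext ⟨x, y, z⟩
    simp only [Set.mem_setOf_eq, Set.mem_image, Prod.mk.injEq, Prod.exists]
    constructor
    · intro h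
      push_cast at h
      have hx : Even (x ^ 2) := by
        refine ⟨2 * N - 2 * b * y ^ 2 - 2 * c * z ^ 2, by linarith⟩
      have hx2 : Even x := (Int.even_pow.mp hx).1
      obtain ⟨u, hu⟩ := hx2
      refine ⟨u, y, z, ?_, by omega, rfl, rfl⟩
      push_cast
      have h4 : (u + u) ^ 2 = 4 * u ^ 2 := by ring
      rw [hu, h4] at h
      linarith
    · rintro ⟨u, y', z', h, hx, hy, hz⟩
      subst hx; subst hy; subst hz
      push_cast at h ⊢
      linarith
  rw [himg, Set.ncard_image_of_injective]
  intro p q h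
  simp only [Prod.mk.injEq] at h
  exact Prod.ext (by linarith [h.1]) h.2

theorem stmt15 (N : ℕ) :
    (rCount 1 1 1 (N : ℤ) : ℤ) =
      (rCount 1 1 4 (N : ℤ) : ℤ) + (rCount 1 4 4 (4 * N : ℤ) : ℤ) -
        (rCount 1 4 16 (4 * N : ℤ) : ℤ) := by
  have h1 : rCount 1 4 4 (4 * N : ℤ) = rCount 1 1 1 (N : ℤ) := key4 1 1 N
  have h2 : rCount 1 4 16 (4 * N : ℤ) = rCount 1 1 4 (N : ℤ) := key4 1 4 N
  rw [h1, h2]; ring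
end

section
/- For each non-negative integer N: r(1,4,4;4N+2) = r(1,4,16;4N+2) and r(1,4,4;4N+3) = r(1,4,16;4N+3). -/
lemma key_empty (M : ℤ) (hM : (M : ZMod 4) = 2 ∨ (M : ZMod 4) = 3) (c : ℕ)
    (hc : ((c : ℤ) : ZMod 4) = 0) : rCount 1 4 c M = 0 := by
  unfold rCount
  convert Set.ncard_empty (ℤ × ℤ × ℤ)
  ext ⟨l, m, n⟩
  simp only [Set.mem_setOf_eq, Set.mem_empty_iff_false, iff_false]
  intro h
  have h4 : (M : ZMod 4) = (l : ZMod 4) ^ 2 := by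
    have := congrArg (fun z : ℤ => (z : ZMod 4)) h
    push_cast at this hc
    rw [this, hc]
    have : ((4 : ℤ) : ZMod 4) = 0 := by decide
    push_cast at this ⊢
    rw [this]
    ring
  have hall : ∀ x : ZMod 4, x ^ 2 ≠ 2 ∧ x ^ 2 ≠ 3 := by decide
  rcases hM with hM | hM <;> rw [hM] at h4
  · exact (hall l).1 h4.symm
  · exact (hall l).2 h4.symm

theorem stmt16 (N : ℕ) :
    rCount 1 4 4 (4 * N + 2 : ℤ) = rCount 1 4 16 (4 * N + 2 : ℤ) ∧
    rCount 1 4 4 (4 * N + 3 : ℤ) = rCount 1 4 16 (4 * N + 3 : ℤ) := by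
  have h2 : ((4 * (N:ℤ) + 2 : ℤ) : ZMod 4) = 2 ∨ ((4 * (N:ℤ) + 2 : ℤ) : ZMod 4) = 3 := by
    left
    push_cast
    have h4 : ((4 : ℤ) : ZMod 4) = 0 := by decide
    push_cast at h4
    rw [h4]; ring
  have h3 : ((4 * (N:ℤ) + 3 : ℤ) : ZMod 4) = 2 ∨ ((4 * (N:ℤ) + 3 : ℤ) : ZMod 4) = 3 := by
    right
    push_cast
    have h4 : ((4 : ℤ) : ZMod 4) = 0 := by decide
    push_cast at h4
    rw [h4]; ring
  refine ⟨?_, ?_⟩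
  · rw [key_empty _ h2 4 (by decide), key_empty _ h2 16 (by decide)]
  · rw [key_empty _ h3 4 (by decide), key_empty _ h3 16 (by decide)]
end

section
/- For each non-negative integer N: T(1,1,8;2N) = T(1,2,2;N) and T(1,1,8;2N+1) = 2·T(1,4,4;N). -/
lemma two_tri (n : ℕ) : 2 * tri n = n * (n + 1) := by
  obtain ⟨k, hk⟩ := Nat.even_mul_succ_self n
  unfold tri; rw [hk]; omega

lemma two_tri' (n : ℕ) : 2 * (tri n : ℤ) = (n : ℤ) * (n + 1) := by exact_mod_cast two_tri n

/-- The standard bijection `ℤ × ℕ → ℕ × ℕ` with `t_{g.1} + t_{g.2} = k² + 2 t_n`. -/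
def gg (x : ℤ × ℕ) : ℕ × ℕ :=
  if x.1.natAbs ≤ x.2 then (((x.2 : ℤ) + x.1).toNat, ((x.2 : ℤ) - x.1).toNat)
  else if 0 < x.1 then ((x.1 + x.2).toNat, (x.1 - x.2 - 1).toNat)
  else ((-x.1 - x.2 - 1).toNat, (-x.1 + x.2).toNat)

def gginv (p : ℕ × ℕ) : ℤ × ℕ :=
  if (p.1 + p.2) % 2 = 0 then (((p.1 : ℤ) - p.2) / 2, (p.1 + p.2) / 2)
  else if p.2 < p.1 then (((p.1 + p.2 + 1 : ℕ) / 2 : ℤ), (p.1 - p.2 - 1) / 2)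
  else (-(((p.1 + p.2 + 1 : ℕ) / 2 : ℤ)), (p.2 - p.1 - 1) / 2)

lemma gginv_gg (x : ℤ × ℕ) : gginv (gg x) = x := by
  obtain ⟨k, n⟩ := x
  simp only [gg, gginv]
  split_ifs <;> simp_all [Prod.ext_iff] <;> omega

lemma gg_gginv (p : ℕ × ℕ) : gg (gginv p) = p := by
  obtain ⟨l, m⟩ := p
  simp only [gg, gginv]
  split_ifs <;> simp_all [Prod.ext_iff] <;> omega

lemma gg_tri (k : ℤ) (n : ℕ) :
    (tri (gg (k, n)).1 : ℤ) + tri (gg (k, n)).2 = k ^ 2 + 2 * tri n := by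
  simp only [gg]
  split_ifs with h1 h2 <;> simp_all only []
  · have ha : ((((n : ℤ) + k).toNat : ℤ)) = n + k := by omega
    have hb : ((((n : ℤ) - k).toNat : ℤ)) = n - k := by omega
    have t1 := two_tri' (((n : ℤ) + k).toNat)
    have t2 := two_tri' (((n : ℤ) - k).toNat)
    have t3 := two_tri' n
    rw [ha] at t1; rw [hb] at t2
    nlinarith [t1, t2, t3]
  · have ha : (((k + (n : ℤ)).toNat : ℤ)) = k + n := by omega
    have hb : (((k - (n : ℤ) - 1).toNat : ℤ)) = k - n - 1 := by omega
    have t1 := two_tri' ((k + (n : ℤ)).toNat)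
    have t2 := two_tri' ((k - (n : ℤ) - 1).toNat)
    have t3 := two_tri' n
    rw [ha] at t1; rw [hb] at t2
    nlinarith [t1, t2, t3]
  · have ha : (((-k - (n : ℤ) - 1).toNat : ℤ)) = -k - n - 1 := by omega
    have hb : (((-k + (n : ℤ)).toNat : ℤ)) = -k + n := by omega
    have t1 := two_tri' ((-k - (n : ℤ) - 1).toNat)
    have t2 := two_tri' ((-k + (n : ℤ)).toNat)
    have t3 := two_tri' n
    rw [ha] at t1; rw [hb] at t2
    nlinarith [t1, t2, t3]

lemma gg_inj : Function.Injective gg := Function.LeftInverse.injective gginv_gg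
lemma gg_surj : Function.Surjective gg := fun p => ⟨gginv p, gg_gginv p⟩

lemma ncard_img {α β : Type*} {f : α → β} (hf : Function.Injective f) {s : Set α} {t : Set β}
    (h : f '' s = t) : t.ncard = s.ncard := by
  subst h; exact Set.ncard_image_of_injective s hf

/-- replace `t_l + t_m` (first two coords) by `k² + 2 t_p`. -/
lemma step1 (C c : ℤ) :
    {y : ℕ × ℕ × ℕ | C = tri y.1 + tri y.2.1 + c * tri y.2.2}.ncard
      = {x : ℤ × ℕ × ℕ | C = x.1 ^ 2 + 2 * tri x.2.1 + c * tri x.2.2}.ncard := by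
  apply ncard_img (f := fun x : ℤ × ℕ × ℕ => ((gg (x.1, x.2.1)).1, (gg (x.1, x.2.1)).2, x.2.2))
  · rintro ⟨k1, p1, n1⟩ ⟨k2, p2, n2⟩ h
    simp only [Prod.mk.injEq] at h
    have h2 : gg (k1, p1) = gg (k2, p2) := Prod.ext_iff.mpr ⟨h.1, h.2.1⟩
    have h3 := gg_inj h2
    simp only [Prod.mk.injEq] at h3 ⊢
    exact ⟨h3.1, h3.2, h.2.2⟩
  · ext ⟨a, b, c3⟩
    simp only [Set.mem_image, Set.mem_setOf_eq]
    constructor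
    · rintro ⟨⟨k, p, n⟩, hx, heq⟩
      simp only [Prod.mk.injEq] at heq
      obtain ⟨h1, h2, h3⟩ := heq
      have := gg_tri k p
      rw [h1, h2] at this
      subst h3
      linarith
    · intro h
      obtain ⟨⟨k, p⟩, hk⟩ := gg_surj (a, b)
      refine ⟨(k, p, c3), ?_, by simp [hk]⟩
      have := gg_tri k p
      rw [hk] at this
      simp only [Set.mem_setOf_eq]
      simp at this
      linarith

/-- replace `2 t_b + 2 t_c` (last two coords) by `2k² + 4 t_n`. -/
lemma step2 (C : ℤ) :
    {y : ℕ × ℕ × ℕ | C = tri y.1 + 2 * tri y.2.1 + 2 * tri y.2.2}.ncard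
      = {x : ℕ × ℤ × ℕ | C = tri x.1 + 2 * x.2.1 ^ 2 + 4 * tri x.2.2}.ncard := by
  apply ncard_img (f := fun x : ℕ × ℤ × ℕ => (x.1, (gg (x.2.1, x.2.2)).1, (gg (x.2.1, x.2.2)).2))
  · rintro ⟨a1, k1, n1⟩ ⟨a2, k2, n2⟩ h
    simp only [Prod.mk.injEq] at h
    have h2 : gg (k1, n1) = gg (k2, n2) := Prod.ext_iff.mpr ⟨h.2.1, h.2.2⟩
    have h3 := gg_inj h2
    simp only [Prod.mk.injEq] at h3 ⊢
    exact ⟨h.1, h3.1, h3.2⟩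
  · ext ⟨a, b, c3⟩
    simp only [Set.mem_image, Set.mem_setOf_eq]
    constructor
    · rintro ⟨⟨p, k, n⟩, hx, heq⟩
      simp only [Prod.mk.injEq] at heq
      obtain ⟨h1, h2, h3⟩ := heq
      have := gg_tri k n
      rw [h2, h3] at this
      subst h1
      linarith
    · intro h
      obtain ⟨⟨k, n⟩, hk⟩ := gg_surj (b, c3)
      refine ⟨(a, k, n), ?_, by simp [hk]⟩
      have := gg_tri k n
      rw [hk] at this
      simp only [Set.mem_setOf_eq]
      simp at this
      linarith

/-- even case: halve. -/
lemma stepDouble (N : ℕ) :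
    {x : ℤ × ℕ × ℕ | (2 * N : ℤ) = x.1 ^ 2 + 2 * tri x.2.1 + 8 * tri x.2.2}.ncard
      = {x : ℤ × ℕ × ℕ | (N : ℤ) = 2 * x.1 ^ 2 + tri x.2.1 + 4 * tri x.2.2}.ncard := by
  apply ncard_img (f := fun x : ℤ × ℕ × ℕ => (2 * x.1, x.2.1, x.2.2))
  · rintro ⟨k1, p1, n1⟩ ⟨k2, p2, n2⟩ h
    simp only [Prod.mk.injEq] at h ⊢
    omega
  · ext ⟨k, p, n⟩
    simp only [Set.mem_image, Set.mem_setOf_eq]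
    constructor
    · rintro ⟨⟨j, p1, n1⟩, hx, heq⟩
      simp only [Prod.mk.injEq] at heq
      obtain ⟨h1, h2, h3⟩ := heq
      subst h1 h2 h3
      rw [hx]; ring
    · intro h
      have hev : Even (k ^ 2) := ⟨N - tri p - 4 * tri n, by linarith⟩
      have hk : Even k := (Int.even_pow.mp hev).1
      obtain ⟨j, hj⟩ := hk
      refine ⟨(j, p, n), ?_, by simp [Prod.ext_iff]; omega⟩
      simp only [Set.mem_setOf_eq]
      have : k ^ 2 = 4 * j ^ 2 := by rw [hj]; ring
      linarith

lemma stepSwap (N : ℕ) :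
    {x : ℤ × ℕ × ℕ | (N : ℤ) = 2 * x.1 ^ 2 + tri x.2.1 + 4 * tri x.2.2}.ncard
      = {x : ℕ × ℤ × ℕ | (N : ℤ) = tri x.1 + 2 * x.2.1 ^ 2 + 4 * tri x.2.2}.ncard := by
  apply (ncard_img (f := fun x : ℤ × ℕ × ℕ => (x.2.1, x.1, x.2.2)) ?_ ?_).symm
  · rintro ⟨k1, p1, n1⟩ ⟨k2, p2, n2⟩ h
    simp only [Prod.mk.injEq] at h ⊢
    tauto
  · ext ⟨p, k, n⟩
    simp only [Set.mem_image, Set.mem_setOf_eq]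
    constructor
    · rintro ⟨⟨k1, p1, n1⟩, hx, heq⟩
      simp only [Prod.mk.injEq] at heq
      obtain ⟨h1, h2, h3⟩ := heq
      subst h1 h2 h3
      linarith
    · intro h
      exact ⟨(k, p, n), by simpa using by linarith, rfl⟩

lemma odd_sq_tri (b : ℕ) : ((2 * b + 1 : ℤ)) ^ 2 = 8 * tri b + 1 := by
  have := two_tri' b; nlinarith [this]

lemma ncard_bool_prod {α : Type*} (S : Set α) :
    ((Set.univ : Set Bool) ×ˢ S).ncard = 2 * S.ncard := by
  rw [← Nat.card_coe_set_eq, ← Nat.card_coe_set_eq]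
  rw [Nat.card_congr (Equiv.Set.prod _ _), Nat.card_prod]
  congr 1
  rw [Nat.card_congr (Equiv.Set.univ Bool), Nat.card_eq_fintype_card, Fintype.card_bool]

/-- odd case: the square is an odd square `(±(2b+1))² = 8 t_b + 1`. -/
lemma stepOdd (N : ℕ) :
    {x : ℤ × ℕ × ℕ | (2 * N + 1 : ℤ) = x.1 ^ 2 + 2 * tri x.2.1 + 8 * tri x.2.2}.ncard
      = 2 * {y : ℕ × ℕ × ℕ | (N : ℤ) = tri y.1 + 4 * tri y.2.1 + 4 * tri y.2.2}.ncard := by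
  rw [← ncard_bool_prod]
  apply ncard_img
    (f := fun z : Bool × (ℕ × ℕ × ℕ) =>
      ((if z.1 then (2 * z.2.2.1 + 1 : ℤ) else -(2 * z.2.2.1 + 1)), z.2.1, z.2.2.2))
  · rintro ⟨e1, a1, b1, c1⟩ ⟨e2, a2, b2, c2⟩ h
    simp only [Prod.mk.injEq] at h ⊢
    cases e1 <;> cases e2 <;> simp_all <;> omega
  · ext ⟨k, p, n⟩
    simp only [Set.mem_image, Set.mem_prod, Set.mem_univ, Set.mem_setOf_eq, true_and]
    constructor
    · rintro ⟨⟨e, a, b, c⟩, hx, heq⟩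
      simp only [Prod.mk.injEq] at heq
      obtain ⟨h1, h2, h3⟩ := heq
      subst h2 h3
      have hsq : k ^ 2 = 8 * tri b + 1 := by
        cases e
        · simp only [Bool.false_eq_true, if_false] at h1
          rw [← h1, neg_sq]; exact odd_sq_tri b
        · simp only [if_true] at h1
          rw [← h1]; exact odd_sq_tri b
      rw [hsq]
      simp only [Set.mem_setOf_eq] at hx
      linarith
    · intro h
      have hkodd : Odd k := by
        rcases Int.even_or_odd k with he | ho
        · obtain ⟨t, ht⟩ := he
          exfalso
          have h0 : k ^ 2 = 4 * (t * t) := by rw [ht]; ring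
          have h4 : (4 : ℤ) * (t * t) = 2 * N + 1 - 2 * tri p - 8 * tri n := by linarith
          obtain ⟨u, hu⟩ : ∃ u : ℤ, t * t = u := ⟨t * t, rfl⟩
          rw [hu] at h4
          omega
        · exact ho
      obtain ⟨t, ht⟩ := hkodd
      set b : ℕ := (k.natAbs - 1) / 2 with hbdef
      by_cases hpos : 0 < k
      · have hb : (2 * (b : ℤ) + 1) = k := by omega
        refine ⟨(true, p, b, n), ?_, ?_⟩
        · simp only [Set.mem_setOf_eq]
          have hob := odd_sq_tri b
          rw [hb] at hob
          linarith
        · show ((2 * (b : ℤ) + 1), p, n) = (k, p, n)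
          rw [hb]
      · have hb : -(2 * (b : ℤ) + 1) = k := by omega
        refine ⟨(false, p, b, n), ?_, ?_⟩
        · simp only [Set.mem_setOf_eq]
          have hob := odd_sq_tri b
          have h2 : k ^ 2 = (2 * (b : ℤ) + 1) ^ 2 := by rw [← hb]; ring
          rw [h2, hob] at h
          linarith
        · show (-(2 * (b : ℤ) + 1), p, n) = (k, p, n)
          rw [hb]


theorem stmt17 (N : ℕ) :
    TCount 1 1 8 (2 * N : ℤ) = TCount 1 2 2 (N : ℤ) ∧
    TCount 1 1 8 (2 * N + 1 : ℤ) = 2 * TCount 1 4 4 (N : ℤ) := by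
  have e118 : ∀ M : ℤ, TCount 1 1 8 M
      = {y : ℕ × ℕ × ℕ | M = tri y.1 + tri y.2.1 + 8 * tri y.2.2}.ncard := by
    intro M; unfold TCount; congr 1; ext y
    simp only [Set.mem_setOf_eq]; push_cast
    constructor <;> intro h <;> linarith
  have e122 : TCount 1 2 2 (N : ℤ)
      = {y : ℕ × ℕ × ℕ | (N : ℤ) = tri y.1 + 2 * tri y.2.1 + 2 * tri y.2.2}.ncard := by
    unfold TCount; congr 1; ext y
    simp only [Set.mem_setOf_eq]; push_cast
    constructor <;> intro h <;> linarith
  have e144 : TCount 1 4 4 (N : ℤ)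
      = {y : ℕ × ℕ × ℕ | (N : ℤ) = tri y.1 + 4 * tri y.2.1 + 4 * tri y.2.2}.ncard := by
    unfold TCount; congr 1; ext y
    simp only [Set.mem_setOf_eq]; push_cast
    constructor <;> intro h <;> linarith
  constructor
  · rw [e118, e122, step1 (2 * N) 8, step2, stepDouble, stepSwap]
  · rw [e118, e144, step1 (2 * N + 1) 8, stepOdd]
end

section
/- For every complex number q with |q| < 1, ψ(q)²·φ(q) = ψ(q²)·φ(q²)² + 4q·ψ(q²)·ψ(q⁴)². -/
set_option maxHeartbeats 1000000

/-- Ramanujan's theta function `φ(q) = ∑_{n ∈ ℤ} q^(n²)`. -/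
noncomputable def phi (q : ℂ) : ℂ := ∑' n : ℤ, q ^ (n.natAbs ^ 2)

/-- Ramanujan's theta function `ψ(q) = ∑_{n ≥ 0} q^(n(n+1)/2)`. -/
noncomputable def psi (q : ℂ) : ℂ := ∑' n : ℕ, q ^ (n * (n + 1) / 2)

section Aux

/-- Splitting a sum over a sum type. -/
lemma hasSum_sumType {M : Type*} [AddCommMonoid M] [TopologicalSpace M] [ContinuousAdd M]
    {α β : Type*} {f : α ⊕ β → M} {a b : M}
    (ha : HasSum (fun x => f (.inl x)) a) (hb : HasSum (fun x => f (.inr x)) b) :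
    HasSum f (a + b) := by
  have ha' : HasSum (f ∘ (Subtype.val : Set.range (Sum.inl (β := β)) → α ⊕ β)) a := by
    rw [← (Equiv.ofInjective _ (Sum.inl_injective (β := β))).hasSum_iff]
    exact ha
  have hb' : HasSum (f ∘ (Subtype.val : Set.range (Sum.inr (α := α)) → α ⊕ β)) b := by
    rw [← (Equiv.ofInjective _ (Sum.inr_injective (α := α))).hasSum_iff]
    exact hb
  exact ha'.add_isCompl Set.isCompl_range_inl_range_inr hb'

lemma tsum_sumType {α β : Type*} {f : α ⊕ β → ℂ}
    (ha : Summable fun x => f (.inl x)) (hb : Summable fun x => f (.inr x)) :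
    ∑' x, f x = (∑' a, f (.inl a)) + ∑' b, f (.inr b) :=
  (hasSum_sumType ha.hasSum hb.hasSum).tsum_eq

variable {q : ℂ}

lemma sumNat (hq : ‖q‖ < 1) {e : ℕ → ℕ} (he : ∀ n, n ≤ e n) :
    Summable fun n : ℕ => ‖q ^ e n‖ := by
  simp only [norm_pow]
  exact Summable.of_nonneg_of_le (fun n => by positivity)
    (fun n => pow_le_pow_of_le_one (norm_nonneg q) hq.le (he n))
    (summable_geometric_of_lt_one (norm_nonneg q) hq)

lemma sumInt (hq : ‖q‖ < 1) {e : ℤ → ℕ} (he : ∀ n, n.natAbs ≤ e n) :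
    Summable fun n : ℤ => ‖q ^ e n‖ := by
  apply Summable.of_nat_of_neg_add_one
  · exact sumNat hq (fun n => le_trans (by omega) (he n))
  · exact sumNat hq (fun n => le_trans (by omega) (he (-(n + 1))))

lemma hψ (hq : ‖q‖ < 1) : Summable fun n : ℕ => ‖q ^ (n * (n + 1) / 2)‖ :=
  sumNat hq fun n => by
    rw [Nat.le_div_iff_mul_le two_pos]
    nlinarith [Nat.le_self_pow two_ne_zero n]

lemma hψ2 (hq : ‖q‖ < 1) : Summable fun n : ℕ => ‖q ^ (n * (n + 1))‖ :=
  sumNat hq fun n => Nat.le_mul_of_pos_right n (by omega)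

lemma hφ (hq : ‖q‖ < 1) : Summable fun n : ℤ => ‖q ^ (n.natAbs ^ 2)‖ :=
  sumInt hq (fun n => Nat.le_self_pow two_ne_zero _)

lemma hφ2 (hq : ‖q‖ < 1) : Summable fun n : ℤ => ‖q ^ (2 * n.natAbs ^ 2)‖ :=
  sumInt hq fun n =>
    le_trans (Nat.le_self_pow two_ne_zero _) (Nat.le_mul_of_pos_left _ (by omega))

lemma hψ4a (hq : ‖q‖ < 1) :
    Summable fun n : ℕ => ‖q ^ (2 * (((n : ℤ)).natAbs * ((n : ℤ) + 1).natAbs))‖ := by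
  refine sumNat hq fun n => ?_
  rw [show ((n : ℤ)).natAbs = n from rfl, show ((n : ℤ) + 1).natAbs = n + 1 by omega]
  calc n ≤ n * (n + 1) := Nat.le_mul_of_pos_right n (by omega)
  _ ≤ 2 * (n * (n + 1)) := Nat.le_mul_of_pos_left _ (by omega)

lemma hψ4b (hq : ‖q‖ < 1) :
    Summable fun n : ℕ => ‖q ^ (2 * ((-((n : ℤ) + 1)).natAbs * (-((n : ℤ) + 1) + 1).natAbs))‖ := by
  refine sumNat hq fun n => ?_
  rw [show (-((n : ℤ) + 1)).natAbs = n + 1 by omega,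
    show (-((n : ℤ) + 1) + 1).natAbs = n by omega]
  calc n ≤ (n + 1) * n := by nlinarith
  _ ≤ 2 * ((n + 1) * n) := Nat.le_mul_of_pos_left _ (by omega)

lemma hψ4 (hq : ‖q‖ < 1) :
    Summable fun a : ℤ => ‖q ^ (2 * (a.natAbs * (a + 1).natAbs))‖ :=
  Summable.of_nat_of_neg_add_one (hψ4a hq) (hψ4b hq)

lemma psi_two (q : ℂ) : psi (q ^ 2) = ∑' n : ℕ, q ^ (n * (n + 1)) := by
  unfold psi
  refine tsum_congr fun n => ?_
  rw [← pow_mul]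
  congr 1
  exact Nat.mul_div_cancel' (even_iff_two_dvd.mp (Nat.even_mul_succ_self n))

lemma psi_four (q : ℂ) : psi (q ^ 4) = ∑' n : ℕ, q ^ (2 * (n * (n + 1))) := by
  unfold psi
  refine tsum_congr fun n => ?_
  rw [← pow_mul]
  congr 1
  have h2 : 2 ∣ n * (n + 1) := even_iff_two_dvd.mp (Nat.even_mul_succ_self n)
  omega

lemma phi_two (q : ℂ) : phi (q ^ 2) = ∑' n : ℤ, q ^ (2 * n.natAbs ^ 2) := by
  unfold phi
  exact tsum_congr fun n => by rw [← pow_mul]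

lemma tri_add {m n X : ℕ} (h : m * (m + 1) + n * (n + 1) = 2 * X) :
    m * (m + 1) / 2 + n * (n + 1) / 2 = X := by
  obtain ⟨x, hx⟩ := Nat.even_mul_succ_self m
  obtain ⟨y, hy⟩ := Nat.even_mul_succ_self n
  rw [hx, hy]; rw [hx, hy] at h; omega

/-- The reindexing bijection `ℤ × ℕ ≃ ℕ × ℕ` behind `ψ(q)² = φ(q)·ψ(q²)`. -/
def gA : ℤ × ℕ ≃ ℕ × ℕ where
  toFun p :=
    if p.1.natAbs ≤ p.2 then (((p.2 : ℤ) + p.1).toNat, ((p.2 : ℤ) - p.1).toNat)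
    else if 0 ≤ p.1 then (p.1.toNat + p.2, p.1.toNat - p.2 - 1)
    else (p.1.natAbs - p.2 - 1, p.1.natAbs + p.2)
  invFun p :=
    if (p.1 + p.2) % 2 = 0 then (((p.1 : ℤ) - p.2) / 2, (p.1 + p.2) / 2)
    else if p.2 < p.1 then (((p.1 : ℤ) + p.2 + 1) / 2, (p.1 - p.2 - 1) / 2)
    else (-(((p.1 : ℤ) + p.2 + 1) / 2), (p.2 - p.1 - 1) / 2)
  left_inv := by
    rintro ⟨a, b⟩
    dsimp only
    split_ifs with h1 h2 <;> dsimp only at * <;>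
      simp only [Prod.mk.injEq] <;> constructor <;> omega
  right_inv := by
    rintro ⟨m, n⟩
    dsimp only
    split_ifs with h1 h2 <;> dsimp only at * <;>
      simp only [Prod.mk.injEq] <;> constructor <;> omega

lemma gA_exp (p : ℤ × ℕ) :
    (gA p).1 * ((gA p).1 + 1) / 2 + (gA p).2 * ((gA p).2 + 1) / 2 =
      p.1.natAbs ^ 2 + p.2 * (p.2 + 1) := by
  obtain ⟨a, b⟩ := p
  simp only [gA, Equiv.coe_fn_mk]
  split_ifs with h1 h2 <;> dsimp only at * <;> apply tri_add
  · zify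
    rw [show ((((b : ℤ) + a).toNat : ℤ)) = b + a by omega,
        show ((((b : ℤ) - a).toNat : ℤ)) = b - a by omega, sq_abs]
    ring
  · zify
    rw [show (((a.toNat - b - 1 : ℕ) : ℤ)) = a - b - 1 by omega,
        show ((a.toNat : ℤ)) = a by omega, abs_of_nonneg h2]
    ring
  · zify
    rw [show (((a.natAbs - b - 1 : ℕ) : ℤ)) = -a - b - 1 by omega,
        abs_of_nonpos (by omega)]
    ring

lemma stepA (hq : ‖q‖ < 1) : psi q ^ 2 = phi q * psi (q ^ 2) := by
  rw [sq, phi, psi_two, psi,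
    tsum_mul_tsum_of_summable_norm (hψ hq) (hψ hq),
    tsum_mul_tsum_of_summable_norm (hφ hq) (hψ2 hq),
    ← Equiv.tsum_eq gA (fun z : ℕ × ℕ => q ^ (z.1 * (z.1 + 1) / 2) * q ^ (z.2 * (z.2 + 1) / 2))]
  refine tsum_congr fun p => ?_
  rw [← pow_add, ← pow_add, gA_exp]

/-- The reindexing bijection `(ℤ×ℤ) ⊕ (ℤ×ℤ) ≃ ℤ×ℤ` behind `φ(q)² = φ(q²)² + 4q·ψ(q⁴)²`. -/
def gB : (ℤ × ℤ) ⊕ (ℤ × ℤ) ≃ ℤ × ℤ where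
  toFun := Sum.elim (fun p => (p.1 + p.2, p.1 - p.2)) (fun p => (p.1 + p.2 + 1, p.1 - p.2))
  invFun p :=
    if (p.1 + p.2) % 2 = 0 then .inl ((p.1 + p.2) / 2, (p.1 - p.2) / 2)
    else .inr ((p.1 + p.2 - 1) / 2, (p.1 - p.2 - 1) / 2)
  left_inv := by
    rintro (⟨a, b⟩ | ⟨a, b⟩) <;> dsimp only [Sum.elim_inl, Sum.elim_inr] <;>
      split_ifs with h <;>
      first
        | (simp only [Sum.inl.injEq, Sum.inr.injEq, Prod.mk.injEq]; constructor <;> omega)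
        | (exfalso; omega)
  right_inv := by
    rintro ⟨m, n⟩
    dsimp only
    split_ifs with h <;> simp only [Sum.elim_inl, Sum.elim_inr, Prod.mk.injEq] <;>
      constructor <;> omega

lemma int_mul_succ_nonneg (a : ℤ) : 0 ≤ a * (a + 1) := by nlinarith [sq_nonneg (2 * a + 1)]

lemma gB_exp_even (a b : ℤ) :
    (a + b).natAbs ^ 2 + (a - b).natAbs ^ 2 = 2 * a.natAbs ^ 2 + 2 * b.natAbs ^ 2 := by
  zify
  rw [sq_abs, sq_abs, sq_abs, sq_abs]
  ring

lemma gB_exp_odd (a b : ℤ) :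
    (a + b + 1).natAbs ^ 2 + (a - b).natAbs ^ 2 =
      1 + (2 * (a.natAbs * (a + 1).natAbs) + 2 * (b.natAbs * (b + 1).natAbs)) := by
  zify
  rw [sq_abs, sq_abs, ← abs_mul, ← abs_mul,
    abs_of_nonneg (int_mul_succ_nonneg a), abs_of_nonneg (int_mul_succ_nonneg b)]
  ring

lemma stepB (hq : ‖q‖ < 1) : phi q ^ 2 = phi (q ^ 2) ^ 2 + 4 * q * psi (q ^ 4) ^ 2 := by
  have h4 := hψ4 hq
  have hEe : ∀ p : ℤ × ℤ,
      (fun z : ℤ × ℤ => q ^ (z.1.natAbs ^ 2 + z.2.natAbs ^ 2)) (gB (.inl p)) =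
        q ^ (2 * p.1.natAbs ^ 2) * q ^ (2 * p.2.natAbs ^ 2) := by
    intro p
    simp only [gB, Equiv.coe_fn_mk, Sum.elim_inl]
    rw [← pow_add, gB_exp_even]
  have hEo : ∀ p : ℤ × ℤ,
      (fun z : ℤ × ℤ => q ^ (z.1.natAbs ^ 2 + z.2.natAbs ^ 2)) (gB (.inr p)) =
        q * (q ^ (2 * (p.1.natAbs * (p.1 + 1).natAbs)) *
          q ^ (2 * (p.2.natAbs * (p.2 + 1).natAbs))) := by
    intro p
    simp only [gB, Equiv.coe_fn_mk, Sum.elim_inr]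
    rw [← pow_add, gB_exp_odd, pow_add, pow_one, pow_add]
  have hse : Summable fun p : ℤ × ℤ =>
      (fun z : ℤ × ℤ => q ^ (z.1.natAbs ^ 2 + z.2.natAbs ^ 2)) (gB (.inl p)) :=
    (summable_mul_of_summable_norm (hφ2 hq) (hφ2 hq)).congr fun p => (hEe p).symm
  have hso : Summable fun p : ℤ × ℤ =>
      (fun z : ℤ × ℤ => q ^ (z.1.natAbs ^ 2 + z.2.natAbs ^ 2)) (gB (.inr p)) :=
    ((summable_mul_of_summable_norm h4 h4).mul_left q).congr fun p => (hEo p).symm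
  have hZ : (∑' a : ℤ, q ^ (2 * (a.natAbs * (a + 1).natAbs))) = 2 * psi (q ^ 4) := by
    rw [tsum_of_nat_of_neg_add_one (f := fun a : ℤ => q ^ (2 * (a.natAbs * (a + 1).natAbs)))
      ((hψ4a hq).of_norm) ((hψ4b hq).of_norm), psi_four]
    have e1 : (∑' n : ℕ, q ^ (2 * (((n : ℤ)).natAbs * ((n : ℤ) + 1).natAbs))) =
        ∑' n : ℕ, q ^ (2 * (n * (n + 1))) := by
      refine tsum_congr fun n => ?_
      rw [show ((n : ℤ)).natAbs = n from rfl, show ((n : ℤ) + 1).natAbs = n + 1 by omega]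
    have e2 : (∑' n : ℕ, q ^ (2 * ((-((n : ℤ) + 1)).natAbs * (-((n : ℤ) + 1) + 1).natAbs))) =
        ∑' n : ℕ, q ^ (2 * (n * (n + 1))) := by
      refine tsum_congr fun n => ?_
      rw [show (-((n : ℤ) + 1)).natAbs = n + 1 by omega,
        show (-((n : ℤ) + 1) + 1).natAbs = n by omega,
        show (n + 1) * n = n * (n + 1) from Nat.mul_comm _ _]
    rw [e1, e2]
    ring
  calc phi q ^ 2 = ∑' z : ℤ × ℤ, q ^ (z.1.natAbs ^ 2 + z.2.natAbs ^ 2) := by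
        rw [sq, phi, tsum_mul_tsum_of_summable_norm (hφ hq) (hφ hq)]
        exact tsum_congr fun z => (pow_add q _ _).symm
    _ = ∑' x : (ℤ × ℤ) ⊕ (ℤ × ℤ),
        (fun z : ℤ × ℤ => q ^ (z.1.natAbs ^ 2 + z.2.natAbs ^ 2)) (gB x) :=
        (gB.tsum_eq _).symm
    _ = (∑' p : ℤ × ℤ,
          (fun z : ℤ × ℤ => q ^ (z.1.natAbs ^ 2 + z.2.natAbs ^ 2)) (gB (.inl p)))
        + ∑' p : ℤ × ℤ,
          (fun z : ℤ × ℤ => q ^ (z.1.natAbs ^ 2 + z.2.natAbs ^ 2)) (gB (.inr p)) :=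
        tsum_sumType hse hso
    _ = phi (q ^ 2) ^ 2 + 4 * q * psi (q ^ 4) ^ 2 := by
        congr 1
        · rw [tsum_congr hEe, ← tsum_mul_tsum_of_summable_norm (hφ2 hq) (hφ2 hq),
            ← phi_two, ← sq]
        · rw [tsum_congr hEo, tsum_mul_left, ← tsum_mul_tsum_of_summable_norm h4 h4, hZ]
          ring

end Aux

theorem stmt18 (q : ℂ) (hq : ‖q‖ < 1) :
    psi q ^ 2 * phi q =
      psi (q ^ 2) * phi (q ^ 2) ^ 2 + 4 * q * psi (q ^ 2) * psi (q ^ 4) ^ 2 := by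
  have hA := stepA hq
  have hB := stepB hq
  have h : psi q ^ 2 * phi q = phi q ^ 2 * psi (q ^ 2) := by rw [hA]; ring
  rw [h, hB]
  ring
end

section
/- For every positive integer m and every complex number q with |q| < 1, φ(−q^m)·φ(q) = ∑_{α=⌊(1−m)/2⌋}^{⌊(1+m)/2⌋} q^{α²} · f(−q^{m(m+1+2α)}, −q^{m(m+1−2α)}) · f(−q^{m+1−2α}, −q^{m+1+2α}). -/
set_option maxRecDepth 4000

/-- Ramanujan's general theta function
`f(a,b) = ∑_{n ∈ ℤ} a^(n(n+1)/2) b^(n(n-1)/2)`. -/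
noncomputable def ramTheta (a b : ℂ) : ℂ :=
  ∑' n : ℤ, a ^ (n * (n + 1) / 2).toNat * b ^ (n * (n - 1) / 2).toNat

private lemma tri_nonneg (n : ℤ) : 0 ≤ n * (n + 1) / 2 := by
  apply Int.ediv_nonneg _ (by norm_num)
  rcases le_or_gt 0 n with h | h
  · exact mul_nonneg h (by omega)
  · nlinarith [mul_nonneg (by omega : (0:ℤ) ≤ -n) (by omega : (0:ℤ) ≤ -(n+1))]

private lemma tri2_nonneg (n : ℤ) : 0 ≤ n * (n - 1) / 2 := by
  have := tri_nonneg (n - 1)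
  have he : (n - 1) * (n - 1 + 1) = n * (n - 1) := by ring
  rwa [he] at this

private lemma tri_eq (n : ℤ) : 2 * (n * (n + 1) / 2) = n ^ 2 + n := by
  have h : (2 : ℤ) ∣ n * (n + 1) := (Int.even_mul_succ_self n).two_dvd
  rw [Int.mul_ediv_cancel' h]; ring

private lemma tri2_eq (n : ℤ) : 2 * (n * (n - 1) / 2) = n ^ 2 - n := by
  have h : (2 : ℤ) ∣ n * (n - 1) := by
    have := (Int.even_mul_succ_self (n - 1)).two_dvd
    have he : (n - 1) * (n - 1 + 1) = n * (n - 1) := by ring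
    rwa [he] at this
  rw [Int.mul_ediv_cancel' h]; ring

private lemma negOne_pow_congr {a b : ℕ} (h : a % 2 = b % 2) : ((-1 : ℂ)) ^ a = (-1) ^ b := by
  conv_lhs => rw [← Nat.div_add_mod a 2]
  conv_rhs => rw [← Nat.div_add_mod b 2]
  rw [pow_add, pow_add, pow_mul, pow_mul, h, neg_one_sq, one_pow, one_pow]

private lemma sq_mod_two (a : ℕ) : a ^ 2 % 2 = a % 2 := by
  rw [Nat.pow_mod]
  rcases Nat.mod_two_eq_zero_or_one a with h | h <;> rw [h] <;> rfl

/-- key integer identity -/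
private lemma exp_identity (m α n p u v s t : ℤ)
    (hu : 2 * u = n ^ 2 + n) (hv : 2 * v = n ^ 2 - n)
    (hs : 2 * s = p ^ 2 + p) (ht : 2 * t = p ^ 2 - p) :
    α ^ 2 + m * (m + 1 + 2 * α) * u + m * (m + 1 - 2 * α) * v
      + (m + 1 - 2 * α) * s + (m + 1 + 2 * α) * t
    = m * (n + p) ^ 2 + (α + m * n - p) ^ 2 := by
  have G2 : 2 * (α ^ 2 + m * (m + 1 + 2 * α) * u + m * (m + 1 - 2 * α) * v
      + (m + 1 - 2 * α) * s + (m + 1 + 2 * α) * t)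
      = 2 * (m * (n + p) ^ 2 + (α + m * n - p) ^ 2) := by
    linear_combination (m * (m + 1 + 2 * α)) * hu + (m * (m + 1 - 2 * α)) * hv
      + (m + 1 - 2 * α) * hs + (m + 1 + 2 * α) * ht
  linarith

private lemma exp_lower {c₁ c₂ u v : ℤ} (n : ℤ) (hc₁ : 1 ≤ c₁) (hc₂ : 0 ≤ c₂)
    (hu : 2 * u = n ^ 2 + n) (hv : 2 * v = n ^ 2 - n) :
    (n.natAbs : ℤ) ≤ c₁ * u + c₂ * v + 2 := by
  have hu8 : 8 * u ≥ -1 := by nlinarith [sq_nonneg (2 * n + 1)]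
  have hv8 : 8 * v ≥ -1 := by nlinarith [sq_nonneg (2 * n - 1)]
  have hu0 : 0 ≤ u := by omega
  have hv0 : 0 ≤ v := by omega
  have h1 : u ≤ c₁ * u := le_mul_of_one_le_left hu0 hc₁
  have h2 : 0 ≤ c₂ * v := mul_nonneg hc₂ hv0
  rcases le_or_gt 0 n with h | h
  · rw [Int.natAbs_of_nonneg h]
    nlinarith [sq_nonneg (n - 1)]
  · have : (n.natAbs : ℤ) = -n := Int.ofNat_natAbs_of_nonpos h.le
    rw [this]
    have h1' : v ≤ c₁ * v := le_mul_of_one_le_left hv0 hc₁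
    -- here coefficient on v might be c₂ ≥ 0 only; use u bound instead
    nlinarith [sq_nonneg (n + 1)]

private lemma summable_natAbs_sub {r : ℝ} (h0 : 0 ≤ r) (h1 : r < 1) :
    Summable fun n : ℤ ↦ r ^ (n.natAbs - 2) := by
  have hnat : Summable fun k : ℕ ↦ r ^ (k - 2) := by
    rw [← summable_nat_add_iff 2]
    simpa using summable_geometric_of_lt_one h0 h1
  apply Summable.of_nat_of_neg <;> simpa using hnat

private lemma summable_pow_exp {r : ℝ} (h0 : 0 ≤ r) (h1 : r < 1) (e : ℤ × ℤ → ℕ)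
    (he : ∀ x : ℤ × ℤ, (x.1.natAbs - 2) + (x.2.natAbs - 2) ≤ e x) :
    Summable fun x : ℤ × ℤ ↦ r ^ e x := by
  have hg := Summable.mul_of_nonneg (summable_natAbs_sub h0 h1) (summable_natAbs_sub h0 h1)
    (fun n ↦ pow_nonneg h0 _) (fun n ↦ pow_nonneg h0 _)
  apply Summable.of_nonneg_of_le (fun x ↦ pow_nonneg h0 _) (fun x ↦ ?_) hg
  calc r ^ e x ≤ r ^ ((x.1.natAbs - 2) + (x.2.natAbs - 2)) :=
        pow_le_pow_of_le_one h0 h1.le (he x)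
    _ = r ^ (x.1.natAbs - 2) * r ^ (x.2.natAbs - 2) := pow_add r _ _

private lemma tsum_mul_tsum_prod {f g : ℤ → ℂ} (h : Summable fun x : ℤ × ℤ ↦ f x.1 * g x.2) :
    (∑' n, f n) * (∑' n, g n) = ∑' x : ℤ × ℤ, f x.1 * g x.2 := by
  rw [Summable.tsum_prod h]
  simp only []
  simp_rw [tsum_mul_left, tsum_mul_right]

/-- the dissection bijection -/
private def dissectEquiv (m : ℕ) :
    {x // x ∈ Finset.Icc ((1 - (m : ℤ)) / 2) ((1 + (m : ℤ)) / 2)} × ℤ × ℤ ≃ ℤ × ℤ where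
  toFun y := (y.2.1 + y.2.2, (y.1 : ℤ) + (m : ℤ) * y.2.1 - y.2.2)
  invFun z := (⟨(1 - (m : ℤ)) / 2 + (z.1 + z.2 - (1 - (m : ℤ)) / 2) % ((m : ℤ) + 1), by
      rw [Finset.mem_Icc]
      have h1 : 0 ≤ (z.1 + z.2 - (1 - (m : ℤ)) / 2) % ((m : ℤ) + 1) :=
        Int.emod_nonneg _ (by omega)
      have h2 : (z.1 + z.2 - (1 - (m : ℤ)) / 2) % ((m : ℤ) + 1) < (m : ℤ) + 1 :=
        Int.emod_lt_of_pos _ (by omega)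
      omega⟩,
      (z.1 + z.2 - (1 - (m : ℤ)) / 2) / ((m : ℤ) + 1),
      z.1 - (z.1 + z.2 - (1 - (m : ℤ)) / 2) / ((m : ℤ) + 1))
  left_inv := by
    rintro ⟨⟨α, hα⟩, n, p⟩
    rw [Finset.mem_Icc] at hα
    have hx : n + p + ((α : ℤ) + (m : ℤ) * n - p) - (1 - (m : ℤ)) / 2
        = (α - (1 - (m : ℤ)) / 2) + ((m : ℤ) + 1) * n := by ring
    have hmod : (α - (1 - (m : ℤ)) / 2) % ((m : ℤ) + 1) = α - (1 - (m : ℤ)) / 2 :=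
      Int.emod_eq_of_lt (by omega) (by omega)
    have hdiv : (α - (1 - (m : ℤ)) / 2 + ((m : ℤ) + 1) * n) / ((m : ℤ) + 1) = n := by
      rw [Int.add_mul_ediv_left _ _ (by omega : ((m : ℤ) + 1) ≠ 0),
        Int.ediv_eq_zero_of_lt (by omega) (by omega), zero_add]
    simp only [hx, Int.add_mul_emod_self_left, hmod, hdiv]
    simp only [Prod.mk.injEq, Subtype.mk.injEq, and_true, true_and]
    omega
  right_inv := by
    rintro ⟨j, k⟩
    simp only [Prod.mk.injEq]
    constructor
    · ring
    · linear_combination Int.emod_add_mul_ediv (j + k - (1 - (m : ℤ)) / 2) ((m : ℤ) + 1)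

/-- the crucial term-by-term identity -/
private lemma term_eq (m : ℕ) (q : ℂ) (α n p : ℤ)
    (h1 : 0 ≤ (m : ℤ) + 1 - 2 * α) (h2 : 0 ≤ (m : ℤ) + 1 + 2 * α) :
    q ^ (α ^ 2).toNat *
      ((-(q ^ ((m : ℤ) * ((m : ℤ) + 1 + 2 * α)).toNat)) ^ (n * (n + 1) / 2).toNat *
       (-(q ^ ((m : ℤ) * ((m : ℤ) + 1 - 2 * α)).toNat)) ^ (n * (n - 1) / 2).toNat) *
      ((-(q ^ ((m : ℤ) + 1 - 2 * α).toNat)) ^ (p * (p + 1) / 2).toNat *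
       (-(q ^ ((m : ℤ) + 1 + 2 * α).toNat)) ^ (p * (p - 1) / 2).toNat)
    = (-(q ^ m)) ^ ((n + p).natAbs ^ 2) * q ^ ((α + (m : ℤ) * n - p).natAbs ^ 2) := by
  set a : ℕ := (α ^ 2).toNat with ha
  set A1 : ℕ := ((m : ℤ) * ((m : ℤ) + 1 + 2 * α)).toNat with hA1
  set A2 : ℕ := ((m : ℤ) * ((m : ℤ) + 1 - 2 * α)).toNat with hA2
  set B1 : ℕ := ((m : ℤ) + 1 - 2 * α).toNat with hB1
  set B2 : ℕ := ((m : ℤ) + 1 + 2 * α).toNat with hB2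
  set t1 : ℕ := (n * (n + 1) / 2).toNat with ht1
  set t2 : ℕ := (n * (n - 1) / 2).toNat with ht2
  set s1 : ℕ := (p * (p + 1) / 2).toNat with hs1
  set s2 : ℕ := (p * (p - 1) / 2).toNat with hs2
  set N : ℕ := (n + p).natAbs ^ 2 with hN
  set K : ℕ := (α + (m : ℤ) * n - p).natAbs ^ 2 with hK
  have ca : (a : ℤ) = α ^ 2 := Int.toNat_of_nonneg (sq_nonneg α)
  have cA1 : (A1 : ℤ) = (m : ℤ) * ((m : ℤ) + 1 + 2 * α) :=
    Int.toNat_of_nonneg (mul_nonneg (by positivity) h2)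
  have cA2 : (A2 : ℤ) = (m : ℤ) * ((m : ℤ) + 1 - 2 * α) :=
    Int.toNat_of_nonneg (mul_nonneg (by positivity) h1)
  have cB1 : (B1 : ℤ) = (m : ℤ) + 1 - 2 * α := Int.toNat_of_nonneg h1
  have cB2 : (B2 : ℤ) = (m : ℤ) + 1 + 2 * α := Int.toNat_of_nonneg h2
  have ct1 : (t1 : ℤ) = n * (n + 1) / 2 := Int.toNat_of_nonneg (tri_nonneg n)
  have ct2 : (t2 : ℤ) = n * (n - 1) / 2 := Int.toNat_of_nonneg (tri2_nonneg n)
  have cs1 : (s1 : ℤ) = p * (p + 1) / 2 := Int.toNat_of_nonneg (tri_nonneg p)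
  have cs2 : (s2 : ℤ) = p * (p - 1) / 2 := Int.toNat_of_nonneg (tri2_nonneg p)
  have h2t1 : 2 * (t1 : ℤ) = n ^ 2 + n := by rw [ct1]; exact tri_eq n
  have h2t2 : 2 * (t2 : ℤ) = n ^ 2 - n := by rw [ct2]; exact tri2_eq n
  have h2s1 : 2 * (s1 : ℤ) = p ^ 2 + p := by rw [cs1]; exact tri_eq p
  have h2s2 : 2 * (s2 : ℤ) = p ^ 2 - p := by rw [cs2]; exact tri2_eq p
  have cN : (N : ℤ) = (n + p) ^ 2 := by
    rw [hN]; push_cast; rw [sq_abs]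
  have cK : (K : ℤ) = (α + (m : ℤ) * n - p) ^ 2 := by
    rw [hK]; push_cast; rw [sq_abs]
  -- the exponent identity over ℕ
  have hS : a + A1 * t1 + A2 * t2 + B1 * s1 + B2 * s2 = m * N + K := by
    have : ((a + A1 * t1 + A2 * t2 + B1 * s1 + B2 * s2 : ℕ) : ℤ) = ((m * N + K : ℕ) : ℤ) := by
      push_cast [ca, cA1, cA2, cB1, cB2, ct1, ct2, cs1, cs2, cN, cK]
      rw [← ct1, ← ct2, ← cs1, ← cs2]
      exact exp_identity (m : ℤ) α n p _ _ _ _ h2t1 h2t2 h2s1 h2s2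
    exact_mod_cast this
  -- the sign identity
  have hTn : t1 + t2 = n.natAbs ^ 2 := by
    have : ((t1 + t2 : ℕ) : ℤ) = ((n.natAbs ^ 2 : ℕ) : ℤ) := by
      push_cast
      rw [sq_abs]
      linarith [h2t1, h2t2]
    exact_mod_cast this
  have hTp : s1 + s2 = p.natAbs ^ 2 := by
    have : ((s1 + s2 : ℕ) : ℤ) = ((p.natAbs ^ 2 : ℕ) : ℤ) := by
      push_cast
      rw [sq_abs]
      linarith [h2s1, h2s2]
    exact_mod_cast this
  have hpar : (t1 + t2 + s1 + s2) % 2 = N % 2 := by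
    have hc := sq_mod_two (n + p).natAbs
    rw [hN, hc, Nat.add_assoc (t1 + t2), Nat.add_mod, hTn, hTp, sq_mod_two, sq_mod_two,
      ← Nat.add_mod]
    omega
  have hsign : ((-1 : ℂ)) ^ t1 * (-1) ^ t2 * (-1) ^ s1 * (-1) ^ s2 = (-1) ^ N := by
    rw [← pow_add, ← pow_add, ← pow_add]
    exact negOne_pow_congr hpar
  have hqpow : q ^ a * q ^ (A1 * t1) * q ^ (A2 * t2) * q ^ (B1 * s1) * q ^ (B2 * s2)
      = q ^ (m * N) * q ^ K := by
    rw [← pow_add, ← pow_add, ← pow_add, ← pow_add, hS, pow_add]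
  have hneg : ∀ (A B : ℕ), (-(q ^ A)) ^ B = (-1 : ℂ) ^ B * q ^ (A * B) := by
    intro A B; rw [neg_pow, pow_mul]
  calc q ^ a * ((-(q ^ A1)) ^ t1 * (-(q ^ A2)) ^ t2) * ((-(q ^ B1)) ^ s1 * (-(q ^ B2)) ^ s2)
      = ((-1 : ℂ) ^ t1 * (-1) ^ t2 * (-1) ^ s1 * (-1) ^ s2) *
        (q ^ a * q ^ (A1 * t1) * q ^ (A2 * t2) * q ^ (B1 * s1) * q ^ (B2 * s2)) := by
        rw [hneg, hneg, hneg, hneg]; ring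
    _ = (-1 : ℂ) ^ N * (q ^ (m * N) * q ^ K) := by rw [hsign, hqpow]
    _ = (-(q ^ m)) ^ N * q ^ K := by rw [hneg]; ring

theorem stmt19 (m : ℕ) (hm : 0 < m) (q : ℂ) (hq : ‖q‖ < 1) :
    phi (-(q ^ m)) * phi q =
      ∑ α ∈ Finset.Icc ((1 - (m : ℤ)) / 2) ((1 + (m : ℤ)) / 2),
        q ^ (α ^ 2).toNat *
          ramTheta (-(q ^ ((m : ℤ) * ((m : ℤ) + 1 + 2 * α)).toNat))
            (-(q ^ ((m : ℤ) * ((m : ℤ) + 1 - 2 * α)).toNat)) *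
          ramTheta (-(q ^ ((m : ℤ) + 1 - 2 * α).toNat))
            (-(q ^ ((m : ℤ) + 1 + 2 * α).toNat)) := by
  have h0 : (0 : ℝ) ≤ ‖q‖ := norm_nonneg q
  set F : ℤ × ℤ → ℂ := fun x ↦ (-(q ^ m)) ^ (x.1.natAbs ^ 2) * q ^ (x.2.natAbs ^ 2) with hFdef
  -- summability of F
  have hFnorm : ∀ x : ℤ × ℤ, ‖F x‖ = ‖q‖ ^ (m * x.1.natAbs ^ 2 + x.2.natAbs ^ 2) := by
    intro x
    simp only [hFdef, norm_mul, norm_pow, norm_neg, ← pow_mul, pow_add]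
  have hFsum : Summable F := by
    apply Summable.of_norm
    simp only [hFnorm]
    apply summable_pow_exp h0 hq
    intro x
    have ha : x.1.natAbs ≤ m * x.1.natAbs ^ 2 :=
      (Nat.le_self_pow two_ne_zero _).trans (Nat.le_mul_of_pos_left _ hm)
    have hb : x.2.natAbs ≤ x.2.natAbs ^ 2 := Nat.le_self_pow two_ne_zero _
    calc (x.1.natAbs - 2) + (x.2.natAbs - 2) ≤ x.1.natAbs + x.2.natAbs := by omega
      _ ≤ _ := Nat.add_le_add ha hb
  -- left-hand side as a double sum
  have hL : phi (-(q ^ m)) * phi q = ∑' x : ℤ × ℤ, F x := by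
    rw [phi, phi]
    exact tsum_mul_tsum_prod hFsum
  -- each summand on the right
  have hstep : ∀ α ∈ Finset.Icc ((1 - (m : ℤ)) / 2) ((1 + (m : ℤ)) / 2),
      q ^ (α ^ 2).toNat *
        ramTheta (-(q ^ ((m : ℤ) * ((m : ℤ) + 1 + 2 * α)).toNat))
          (-(q ^ ((m : ℤ) * ((m : ℤ) + 1 - 2 * α)).toNat)) *
        ramTheta (-(q ^ ((m : ℤ) + 1 - 2 * α).toNat))
          (-(q ^ ((m : ℤ) + 1 + 2 * α).toNat))
      = ∑' x : ℤ × ℤ, F (x.1 + x.2, α + (m : ℤ) * x.1 - x.2) := by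
    intro α hα
    rw [Finset.mem_Icc] at hα
    have h1 : 0 ≤ (m : ℤ) + 1 - 2 * α := by omega
    have h2 : 0 ≤ (m : ℤ) + 1 + 2 * α := by omega
    have h2' : 0 ≤ (m : ℤ) + 2 * α := by omega
    set f1 : ℤ → ℂ := fun n ↦
      (-(q ^ ((m : ℤ) * ((m : ℤ) + 1 + 2 * α)).toNat)) ^ (n * (n + 1) / 2).toNat *
      (-(q ^ ((m : ℤ) * ((m : ℤ) + 1 - 2 * α)).toNat)) ^ (n * (n - 1) / 2).toNat with hf1
    set f2 : ℤ → ℂ := fun p ↦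
      (-(q ^ ((m : ℤ) + 1 - 2 * α).toNat)) ^ (p * (p + 1) / 2).toNat *
      (-(q ^ ((m : ℤ) + 1 + 2 * α).toNat)) ^ (p * (p - 1) / 2).toNat with hf2
    have hnorm1 : ∀ n : ℤ, ‖f1 n‖ = ‖q‖ ^
        (((m : ℤ) * ((m : ℤ) + 1 + 2 * α)).toNat * (n * (n + 1) / 2).toNat
          + ((m : ℤ) * ((m : ℤ) + 1 - 2 * α)).toNat * (n * (n - 1) / 2).toNat) := by
      intro n
      simp only [hf1, norm_mul, norm_pow, norm_neg, ← pow_mul, pow_add]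
    have hnorm2 : ∀ p : ℤ, ‖f2 p‖ = ‖q‖ ^
        (((m : ℤ) + 1 - 2 * α).toNat * (p * (p + 1) / 2).toNat
          + ((m : ℤ) + 1 + 2 * α).toNat * (p * (p - 1) / 2).toNat) := by
      intro p
      simp only [hf2, norm_mul, norm_pow, norm_neg, ← pow_mul, pow_add]
    -- lower bounds on exponents
    have key1 : ∀ n : ℤ, n.natAbs - 2 ≤
        ((m : ℤ) * ((m : ℤ) + 1 + 2 * α)).toNat * (n * (n + 1) / 2).toNat
          + ((m : ℤ) * ((m : ℤ) + 1 - 2 * α)).toNat * (n * (n - 1) / 2).toNat := by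
      intro n
      have hc1 : (1 : ℤ) ≤ (m : ℤ) * ((m : ℤ) + 1 + 2 * α) := by
        have : (1 : ℤ) ≤ (m : ℤ) := by exact_mod_cast hm
        nlinarith
      have hc2 : (0 : ℤ) ≤ (m : ℤ) * ((m : ℤ) + 1 - 2 * α) := mul_nonneg (by positivity) h1
      have hb := exp_lower n hc1 hc2 (tri_eq n) (tri2_eq n)
      have hcast : ((((m : ℤ) * ((m : ℤ) + 1 + 2 * α)).toNat * (n * (n + 1) / 2).toNat
          + ((m : ℤ) * ((m : ℤ) + 1 - 2 * α)).toNat * (n * (n - 1) / 2).toNat : ℕ) : ℤ)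
          = (m : ℤ) * ((m : ℤ) + 1 + 2 * α) * (n * (n + 1) / 2)
            + (m : ℤ) * ((m : ℤ) + 1 - 2 * α) * (n * (n - 1) / 2) := by
        push_cast [Int.toNat_of_nonneg (mul_nonneg (by positivity : (0:ℤ) ≤ (m:ℤ)) h2),
          Int.toNat_of_nonneg (mul_nonneg (by positivity : (0:ℤ) ≤ (m:ℤ)) h1),
          Int.toNat_of_nonneg (tri_nonneg n), Int.toNat_of_nonneg (tri2_nonneg n)]
        ring
      omega
    have key2 : ∀ p : ℤ, p.natAbs - 2 ≤
        ((m : ℤ) + 1 - 2 * α).toNat * (p * (p + 1) / 2).toNat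
          + ((m : ℤ) + 1 + 2 * α).toNat * (p * (p - 1) / 2).toNat := by
      intro p
      have hc1 : (1 : ℤ) ≤ (m : ℤ) + 1 + 2 * α := by omega
      have hu : 2 * (p * (p - 1) / 2) = (-p) ^ 2 + (-p) := by rw [tri2_eq]; ring
      have hv : 2 * (p * (p + 1) / 2) = (-p) ^ 2 - (-p) := by rw [tri_eq]; ring
      have hb := exp_lower (-p) hc1 h1 hu hv
      rw [Int.natAbs_neg] at hb
      have hcast : ((((m : ℤ) + 1 - 2 * α).toNat * (p * (p + 1) / 2).toNat
          + ((m : ℤ) + 1 + 2 * α).toNat * (p * (p - 1) / 2).toNat : ℕ) : ℤ)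
          = ((m : ℤ) + 1 - 2 * α) * (p * (p + 1) / 2)
            + ((m : ℤ) + 1 + 2 * α) * (p * (p - 1) / 2) := by
        push_cast [Int.toNat_of_nonneg h1, Int.toNat_of_nonneg h2,
          Int.toNat_of_nonneg (tri_nonneg p), Int.toNat_of_nonneg (tri2_nonneg p)]
        ring
      omega
    have hsum12 : Summable fun x : ℤ × ℤ ↦ f1 x.1 * f2 x.2 := by
      apply Summable.of_norm
      have : ∀ x : ℤ × ℤ, ‖f1 x.1 * f2 x.2‖ = ‖q‖ ^
          ((((m : ℤ) * ((m : ℤ) + 1 + 2 * α)).toNat * (x.1 * (x.1 + 1) / 2).toNat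
            + ((m : ℤ) * ((m : ℤ) + 1 - 2 * α)).toNat * (x.1 * (x.1 - 1) / 2).toNat)
          + (((m : ℤ) + 1 - 2 * α).toNat * (x.2 * (x.2 + 1) / 2).toNat
            + ((m : ℤ) + 1 + 2 * α).toNat * (x.2 * (x.2 - 1) / 2).toNat)) := by
        intro x
        rw [norm_mul, hnorm1, hnorm2, ← pow_add]
      simp only [this]
      apply summable_pow_exp h0 hq
      intro x
      have := key1 x.1
      have := key2 x.2
      omega
    rw [ramTheta, ramTheta, mul_assoc]
    calc q ^ (α ^ 2).toNat * ((∑' n : ℤ, f1 n) * (∑' n : ℤ, f2 n))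
        = q ^ (α ^ 2).toNat * ∑' x : ℤ × ℤ, f1 x.1 * f2 x.2 := by
          rw [tsum_mul_tsum_prod hsum12]
      _ = ∑' x : ℤ × ℤ, q ^ (α ^ 2).toNat * (f1 x.1 * f2 x.2) := by rw [tsum_mul_left]
      _ = ∑' x : ℤ × ℤ, F (x.1 + x.2, α + (m : ℤ) * x.1 - x.2) := by
          apply tsum_congr
          intro x
          simp only [hFdef]
          rw [← mul_assoc]
          exact term_eq m q α x.1 x.2 h1 h2
  -- assemble
  set s := Finset.Icc ((1 - (m : ℤ)) / 2) ((1 + (m : ℤ)) / 2) with hs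
  set E := dissectEquiv m with hE
  have hFE : Summable fun y : {x // x ∈ s} × ℤ × ℤ ↦ F (E y) := by
    have := (E.summable_iff (f := F)).mpr hFsum
    exact this
  calc phi (-(q ^ m)) * phi q = ∑' x : ℤ × ℤ, F x := hL
    _ = ∑' y : {x // x ∈ s} × ℤ × ℤ, F (E y) := (E.tsum_eq F).symm
    _ = ∑' a : {x // x ∈ s}, ∑' x : ℤ × ℤ, F (E (a, x)) := Summable.tsum_prod hFE
    _ = ∑ a : {x // x ∈ s}, ∑' x : ℤ × ℤ, F (E (a, x)) := tsum_fintype _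
    _ = ∑ α ∈ s, ∑' x : ℤ × ℤ, F (x.1 + x.2, α + (m : ℤ) * x.1 - x.2) := by
        rw [← Finset.sum_coe_sort s (fun α ↦ ∑' x : ℤ × ℤ, F (x.1 + x.2, α + (m : ℤ) * x.1 - x.2))]
        apply Finset.sum_congr rfl
        intro a _
        rfl
    _ = _ := Finset.sum_congr rfl fun α hα ↦ (hstep α hα).symm
end
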